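/- arXiv:2010.01980 — 7 statements merged into one kernel-verified Lean document; each statement's English description precedes it below -/
import Mathlib

section
/- The minimal support B-spline basis forms a partition of unity: for a degree p ≥ 0 and a knot vector u_0 ≤ u_1 ≤ … ≤ u_{N+p} with u_{i+p+1} > u_i for i = 0,…,N−1, one has Σ_{i=0}^{N−1} B_{i,p}(x) = 1 for every x ∈ [u_p, u_N). -/
/-- The Cox–de Boor B-spline of degree `p` with local knot vector `u 0, …, u (p+1)`.
Terms with zero denominator are defined to be zero. -/
noncomputable def coxDeBoor : ℕ → (ℕ → ℝ) → ℝ → ℝ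
  | 0, u, x => if u 0 ≤ x ∧ x < u 1 then 1 else 0
  | p + 1, u, x =>
      (if u (p + 1) = u 0 then 0 else (x - u 0) / (u (p + 1) - u 0)) * coxDeBoor p u x +
      (if u (p + 2) = u 1 then 0 else (u (p + 2) - x) / (u (p + 2) - u 1)) *
        coxDeBoor p (fun i => u (i + 1)) x

private lemma bsp_chain {u : ℕ → ℝ} {n : ℕ} (h : ∀ i, i < n → u i ≤ u (i + 1)) :
    ∀ i j, i ≤ j → j ≤ n → u i ≤ u j := by
  intro i j
  induction j with
  | zero => intro hij _; simp [Nat.le_zero.mp hij]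
  | succ k ih =>
    intro hij hjn
    rcases Nat.lt_or_ge i (k + 1) with h1 | h1
    · exact le_trans (ih (by omega) (by omega)) (h k (by omega))
    · have : i = k + 1 := by omega
      simp [this]

private lemma bsp_support : ∀ (p : ℕ) (v : ℕ → ℝ) (x : ℝ),
    (∀ i, i < p + 1 → v i ≤ v (i + 1)) → (x < v 0 ∨ v (p + 1) ≤ x) →
    coxDeBoor p v x = 0 := by
  intro p
  induction p with
  | zero =>
    intro v x hm hx
    simp only [coxDeBoor]
    rw [if_neg]
    rintro ⟨h1, h2⟩
    rcases hx with h | h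
    · linarith
    · linarith
  | succ p ih =>
    intro v x hm hx
    simp only [coxDeBoor]
    rw [ih v x (fun i hi => hm i (by omega))
        (by rcases hx with h | h
            · exact Or.inl h
            · exact Or.inr (le_trans (hm (p + 1) (by omega)) h)),
      ih (fun k => v (k + 1)) x (fun i hi => hm (i + 1) (by omega))
        (by rcases hx with h | h
            · exact Or.inl (lt_of_lt_of_le h (hm 0 (by omega)))
            · exact Or.inr h)]
    ring

private lemma bsp_partition (p : ℕ) : ∀ (N : ℕ) (u : ℕ → ℝ),
    (∀ i, i < N + p → u i ≤ u (i + 1)) →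
    ∀ x : ℝ, u p ≤ x → x < u N →
    ∑ i ∈ Finset.range N, coxDeBoor p (fun k => u (i + k)) x = 1 := by
  induction p with
  | zero =>
    intro N u hu x hx1 hx2
    classical
    have hmono : ∀ i j, i ≤ j → j ≤ N → u i ≤ u j := bsp_chain (by simpa using hu)
    have hN : 0 < N := by
      rcases Nat.eq_zero_or_pos N with h | h
      · subst h; linarith
      · exact h
    set S := (Finset.range N).filter (fun i => u i ≤ x) with hS
    have hSne : S.Nonempty := ⟨0, by simp [hS, hN, hx1]⟩
    set j := S.max' hSne with hj
    have hjS : j ∈ S := S.max'_mem hSne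
    have hjN : j < N := Finset.mem_range.mp (Finset.mem_filter.mp hjS).1
    have hjx : u j ≤ x := (Finset.mem_filter.mp hjS).2
    have hjx2 : x < u (j + 1) := by
      rcases Nat.lt_or_ge (j + 1) N with h | h
      · by_contra hc; push_neg at hc
        have hmem : j + 1 ∈ S := Finset.mem_filter.mpr ⟨Finset.mem_range.mpr h, hc⟩
        have := S.le_max' _ hmem
        omega
      · have hjn : j + 1 = N := by omega
        rw [hjn]; exact hx2
    rw [Finset.sum_eq_single_of_mem j (Finset.mem_range.mpr hjN)]
    · simp only [coxDeBoor]
      rw [if_pos ⟨by simpa using hjx, hjx2⟩]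
    · intro i hi hne
      simp only [coxDeBoor]
      rw [if_neg]
      rintro ⟨h1, h2⟩
      have hiS : i ∈ S := Finset.mem_filter.mpr ⟨hi, by simpa using h1⟩
      have hij : i < j := lt_of_le_of_ne (S.le_max' i hiS) hne
      have : u (i + 1) ≤ u j := hmono (i + 1) j hij (by omega)
      linarith
  | succ p ih =>
    intro N u hu x hx1 hx2
    have hmono : ∀ i j, i ≤ j → j ≤ N + (p + 1) → u i ≤ u j := bsp_chain hu
    have hN : 0 < N := by
      rcases Nat.eq_zero_or_pos N with h | h
      · subst h
        have := hmono 0 (p + 1) (by omega) (by omega)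
        linarith
      · exact h
    obtain ⟨M, rfl⟩ : ∃ M, N = M + 1 := ⟨N - 1, by omega⟩
    set B : ℕ → ℝ := fun i => coxDeBoor p (fun k => u (i + k)) x with hB
    set a : ℕ → ℝ := fun i =>
      if u (i + (p + 1)) = u (i + 0) then 0
      else (x - u (i + 0)) / (u (i + (p + 1)) - u (i + 0)) with ha
    set b : ℕ → ℝ := fun i =>
      if u (i + (p + 2)) = u (i + 1) then 0
      else (u (i + (p + 2)) - x) / (u (i + (p + 2)) - u (i + 1)) with hb
    have hBfun : ∀ i : ℕ, coxDeBoor p (fun k => u (i + (k + 1))) x = B (i + 1) := by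
      intro i
      have hfe : (fun k => u (i + (k + 1))) = (fun k => u ((i + 1) + k)) := by
        funext k; congr 1; omega
      rw [hfe]
    have hexp : ∀ i : ℕ,
        coxDeBoor (p + 1) (fun k => u (i + k)) x = a i * B i + b i * B (i + 1) := by
      intro i
      simp only [coxDeBoor]
      rw [hBfun]
    rw [Finset.sum_congr rfl (fun i _ => hexp i), Finset.sum_add_distrib,
      Finset.sum_range_succ' (fun i => a i * B i) M,
      Finset.sum_range_succ (fun i => b i * B (i + 1)) M]
    have hB0 : B 0 = 0 := by
      apply bsp_support p (fun k => u (0 + k)) x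
      · intro i hi
        simpa using hu i (by omega)
      · right
        simpa using hx1
    have hBN : B (M + 1) = 0 := by
      apply bsp_support p (fun k => u (M + 1 + k)) x
      · intro i hi
        exact hu (M + 1 + i) (by omega)
      · left
        simpa using hx2
    have hmid : ∀ i ∈ Finset.range M, a (i + 1) * B (i + 1) + b i * B (i + 1) = B (i + 1) := by
      intro i hi
      have hi' := Finset.mem_range.mp hi
      have hidx : u (i + 1 + (p + 1)) = u (i + (p + 2)) := by congr 1; omega
      have hidx0 : u (i + 1 + 0) = u (i + 1) := by congr 1
      by_cases h : u (i + (p + 2)) = u (i + 1)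
      · have hBz : B (i + 1) = 0 := by
          apply bsp_support p (fun k => u (i + 1 + k)) x
          · intro l hl
            exact hu (i + 1 + l) (by omega)
          · rcases le_or_gt (u (i + 1 + 0)) x with hc | hc
            · right
              calc u (i + 1 + (p + 1)) = u (i + 1 + 0) := by rw [hidx, hidx0, h]
                _ ≤ x := hc
            · left
              simpa using hc
        rw [hBz]; ring
      · have hcoef : a (i + 1) + b i = 1 := by
          simp only [ha, hb]
          rw [if_neg (by rw [hidx, hidx0]; exact h), if_neg h, hidx, hidx0,
            ← add_div]
          rw [show x - u (i + 1) + (u (i + (p + 2)) - x) = u (i + (p + 2)) - u (i + 1) by ring]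
          exact div_self (sub_ne_zero.mpr h)
        calc a (i + 1) * B (i + 1) + b i * B (i + 1) = (a (i + 1) + b i) * B (i + 1) := by ring
          _ = B (i + 1) := by rw [hcoef]; ring
    have hsum : ∑ i ∈ Finset.range M, B (i + 1) = 1 := by
      have := ih M (fun k => u (k + 1)) (fun i hi => hu (i + 1) (by omega)) x hx1
        (by simpa using hx2)
      rw [← this]
      apply Finset.sum_congr rfl
      intro i _
      simp only [hB]
      congr 1
      funext k
      congr 1
      omega
    have e1 : ∑ i ∈ Finset.range M, a (i + 1) * B (i + 1)
        + ∑ i ∈ Finset.range M, b i * B (i + 1) = 1 := by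
      rw [← Finset.sum_add_distrib, Finset.sum_congr rfl hmid, hsum]
    rw [hB0, hBN]
    ring_nf
    ring_nf at e1
    linarith [e1]

/-- The minimal support B-spline basis B_{i,p} = B[u_i, ..., u_{i+p+1}],
i = 0, ..., N-1, forms a partition of unity on [u p, u N). -/
theorem bspline_partition_of_unity (p N : ℕ) (u : ℕ → ℝ)
    (hu : ∀ i, i < N + p → u i ≤ u (i + 1))
    (hreg : ∀ i, i < N → u i < u (i + p + 1)) :
    ∀ x ∈ Set.Ico (u p) (u N),
      ∑ i ∈ Finset.range N, coxDeBoor p (fun k => u (i + k)) x = 1 := by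
  intro x hx
  exact bsp_partition p N u hu x hx.1 hx.2
end

section
/- Knot insertion does not alter a B-spline curve and the new control points are convex combinations of consecutive old ones: let p ≥ 1, let u_0 ≤ … ≤ u_{N+p} be a knot vector with u_{i+p+1} > u_i for all i, let c_0, …, c_{N−1} ∈ ℝ^d, and let f(x) = Σ_{i=0}^{N−1} c_i B_{i,p}(x). Insert a value a with u_p < a < u_N into the knot vector, obtaining a nondecreasing knot vector û of length N+p+2 with minimal support B-splines B̂_{i,p}, i = 0, …, N. Then there exist ĉ_0, …, ĉ_N ∈ ℝ^d with ĉ_0 = c_0, ĉ_N = c_{N−1}, and each ĉ_i for 0 < i < N lying on the segment between c_{i−1} and c_i, such that Σ_{i=0}^{N} ĉ_i B̂_{i,p}(x) = f(x) for all x ∈ ℝ. -/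
lemma cdb_zero_def (u : ℕ → ℝ) (x : ℝ) :
    coxDeBoor 0 u x = if u 0 ≤ x ∧ x < u 1 then 1 else 0 := rfl

lemma stepMono {f : ℕ → ℝ} {n : ℕ} (h : ∀ i, i < n → f i ≤ f (i+1)) :
    ∀ {i j}, i ≤ j → j ≤ n → f i ≤ f j := by
  intro i j hij hjn
  induction j with
  | zero =>
    have : i = 0 := by omega
    simp [this]
  | succ j ih =>
    rcases Nat.eq_or_lt_of_le hij with rfl | hlt
    · exact le_refl _
    · exact le_trans (ih (by omega) (by omega)) (h j (by omega))

lemma cdb_congr : ∀ (p : ℕ) (t s : ℕ → ℝ) (x : ℝ), (∀ j, j ≤ p + 1 → t j = s j) →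
    coxDeBoor p t x = coxDeBoor p s x := by
  intro p
  induction p with
  | zero => intro t s x h; simp [cdb_zero_def, h 0 (by omega), h 1 (by omega)]
  | succ p ih =>
    intro t s x h
    show _ * coxDeBoor p t x + _ * coxDeBoor p (fun i => t (i+1)) x
      = _ * coxDeBoor p s x + _ * coxDeBoor p (fun i => s (i+1)) x
    rw [h 0 (by omega), h 1 (by omega), h (p+1) (by omega),
      h (p+2) (by omega), ih t s x (fun j hj => h j (by omega)),
      ih (fun i => t (i+1)) (fun i => s (i+1)) x (fun j hj => h (j+1) (by omega))]

lemma cdb_vanish : ∀ (p : ℕ) (t : ℕ → ℝ) (x : ℝ), (∀ i, i ≤ p → t i ≤ t (i+1)) →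
    t (p+1) ≤ t 0 → coxDeBoor p t x = 0 := by
  intro p
  induction p with
  | zero =>
    intro t x hm h0
    rw [cdb_zero_def, if_neg]
    rintro ⟨h1, h2⟩; exact absurd (h1.trans_lt h2) (not_lt.2 h0)
  | succ p ih =>
    intro t x hm h0
    have hall : ∀ i j, i ≤ j → j ≤ p + 2 → t i ≤ t j :=
      fun i j h1 h2 => stepMono (n := p+2) (fun i hi => hm i (by omega)) h1 h2
    show _ * coxDeBoor p t x + _ * coxDeBoor p (fun i => t (i+1)) x = 0
    rw [ih t x (fun i hi => hm i (by omega))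
        (le_trans (hall (p+1) (p+2) (by omega) (by omega))
          (h0.trans (hall 0 0 le_rfl (by omega)))),
      ih (fun i => t (i+1)) x (fun i hi => hm (i+1) (by omega))
        (le_trans h0 (hall 0 1 (by omega) (by omega)))]
    ring

noncomputable def ins (k : ℕ) (y : ℝ) (t : ℕ → ℝ) : ℕ → ℝ :=
  fun j => if j ≤ k then t j else if j = k + 1 then y else t (j - 1)

lemma ins_le {k : ℕ} {y : ℝ} {t : ℕ → ℝ} {j : ℕ} (h : j ≤ k) : ins k y t j = t j :=
  if_pos h

lemma ins_eq {k : ℕ} {y : ℝ} {t : ℕ → ℝ} {j : ℕ} (h : j = k + 1) : ins k y t j = y := by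
  unfold ins; rw [if_neg (by omega), if_pos h]

lemma ins_ge {k : ℕ} {y : ℝ} {t : ℕ → ℝ} {j : ℕ} (h : k + 2 ≤ j) : ins k y t j = t (j-1) := by
  unfold ins; rw [if_neg (by omega), if_neg (by omega)]

lemma ins_mono {k : ℕ} {y : ℝ} {t : ℕ → ℝ} {p : ℕ} (hm : ∀ i, i ≤ p → t i ≤ t (i+1))
    (hk : k ≤ p) (hky : t k ≤ y) (hyk : y ≤ t (k+1)) :
    ∀ i, i ≤ p + 1 → ins k y t i ≤ ins k y t (i+1) := by
  intro i hi
  rcases lt_trichotomy i k with h | rfl | h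
  · rw [ins_le (by omega), ins_le (by omega)]; exact hm i (by omega)
  · rw [ins_le le_rfl, ins_eq rfl]; exact hky
  · rcases Nat.eq_or_lt_of_le h with rfl | h'
    · rw [ins_eq rfl, ins_ge (by omega)]
      simpa using hyk
    · rw [ins_ge (by omega), ins_ge (by omega)]
      have : i - 1 + 1 = i := by omega
      calc t (i-1) ≤ t (i-1+1) := hm (i-1) (by omega)
        _ = t i := by rw [this]

lemma ins_shift {k : ℕ} (hk : 1 ≤ k) (y : ℝ) (t : ℕ → ℝ) :
    ins (k-1) y (fun j => t (j+1)) = fun j => ins k y t (j+1) := by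
  funext j
  simp only [ins]
  split_ifs <;> first | rfl | (exfalso; omega) | (congr 1; omega)

set_option maxHeartbeats 1000000 in
lemma cdb_insert : ∀ (p : ℕ) (t : ℕ → ℝ) (y : ℝ) (k : ℕ),
    (∀ i, i ≤ p → t i ≤ t (i+1)) → k ≤ p → t k ≤ y → y < t (k+1) → ∀ x : ℝ,
    coxDeBoor p t x =
      (if k = p then 1 else (y - t 0) / (t p - t 0)) * coxDeBoor p (ins k y t) x +
      (if k = 0 then 1 else (t (p+1) - y) / (t (p+1) - t 1)) *
        coxDeBoor p (fun j => ins k y t (j+1)) x := by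
  intro p
  induction p with
  | zero =>
    intro t y k hm hk hky hyk x
    have hk0 : k = 0 := by omega
    subst hk0
    have v1 : ins 0 y t 1 = y := ins_eq rfl
    have v2 : ins 0 y t (1+1) = t 1 := ins_ge (by omega)
    rw [if_pos rfl, if_pos rfl, cdb_zero_def, cdb_zero_def, cdb_zero_def,
      ins_le le_rfl, v1]
    show _ = 1 * _ + 1 * (if ins 0 y t (0+1) ≤ x ∧ x < ins 0 y t (1+1) then (1:ℝ) else 0)
    rw [v2]
    have v1' : ins 0 y t (0+1) = y := ins_eq rfl
    rw [v1']
    rcases lt_or_ge x y with h | h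
    · have hiff : (t 0 ≤ x ∧ x < t 1) ↔ (t 0 ≤ x ∧ x < y) := by
        constructor <;> rintro ⟨h1, h2⟩ <;> exact ⟨h1, by linarith⟩
      rw [if_congr hiff rfl rfl,
        if_neg (show ¬(y ≤ x ∧ x < t 1) by rintro ⟨h1, h2⟩; linarith)]
      ring
    · have hiff : (t 0 ≤ x ∧ x < t 1) ↔ (y ≤ x ∧ x < t 1) := by
        constructor <;> rintro ⟨h1, h2⟩ <;> exact ⟨by linarith, h2⟩
      rw [if_congr hiff rfl rfl,
        if_neg (show ¬(t 0 ≤ x ∧ x < y) by rintro ⟨h1, h2⟩; linarith)]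
      ring
  | succ p ih =>
    intro t y k hm hk hky hyk x
    have hall : ∀ i j, i ≤ j → j ≤ p + 2 → t i ≤ t j :=
      fun i j h1 h2 => stepMono (n := p+2) (fun i hi => hm i (by omega)) h1 h2
    have enat : p + 1 + 1 = p + 2 := rfl
    have Et : coxDeBoor (p+1) t x =
        (if t (p+1) = t 0 then 0 else (x - t 0) / (t (p+1) - t 0)) * coxDeBoor p t x +
        (if t (p+2) = t 1 then 0 else (t (p+2) - x) / (t (p+2) - t 1)) *
          coxDeBoor p (fun j => t (j+1)) x := rfl
    have Es : coxDeBoor (p+1) (ins k y t) x =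
        (if ins k y t (p+1) = ins k y t 0 then 0
          else (x - ins k y t 0) / (ins k y t (p+1) - ins k y t 0)) *
            coxDeBoor p (ins k y t) x +
        (if ins k y t (p+2) = ins k y t 1 then 0
          else (ins k y t (p+2) - x) / (ins k y t (p+2) - ins k y t 1)) *
            coxDeBoor p (fun j => ins k y t (j+1)) x := rfl
    have Es1 : coxDeBoor (p+1) (fun j => ins k y t (j+1)) x =
        (if ins k y t (p+2) = ins k y t 1 then 0
          else (x - ins k y t 1) / (ins k y t (p+2) - ins k y t 1)) *
            coxDeBoor p (fun j => ins k y t (j+1)) x +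
        (if ins k y t (p+3) = ins k y t 2 then 0
          else (ins k y t (p+3) - x) / (ins k y t (p+3) - ins k y t 2)) *
            coxDeBoor p (fun j => ins k y t (j+2)) x := rfl
    rw [Et, Es, Es1, enat]
    rcases Nat.lt_or_ge k (p+1) with hklt | hkge
    · -- k ≤ p
      have hkp : k ≤ p := by omega
      have hL := ih t y k (fun i hi => hm i (by omega)) hkp hky hyk x
      rw [hL]
      by_cases hk0 : k = 0
      · subst hk0
        have hBr : coxDeBoor p (fun j => t (j+1)) x
            = coxDeBoor p (fun j => ins 0 y t (j+2)) x :=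
          cdb_congr p _ _ x (fun j hj => (ins_ge (t := t) (y := y) (k := 0) (j := j+2) (by omega)).symm)
        rw [hBr]
        have v0 : ins 0 y t 0 = t 0 := ins_le le_rfl
        have v1 : ins 0 y t 1 = y := ins_eq rfl
        have vp2 : ins 0 y t (p+2) = t (p+1) := ins_ge (by omega)
        have vp3 : ins 0 y t (p+3) = t (p+2) := ins_ge (by omega)
        have v2 : ins 0 y t 2 = t 1 := ins_ge (by omega)
        rw [v0, v1, vp2, vp3, v2, if_pos rfl, if_neg (show ¬(0 = p+1) by omega)]
        have hy1 : y < t 1 := hyk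
        have hd2 : t (p+1) ≠ t 0 :=
          ne_of_gt (lt_of_le_of_lt hky (lt_of_lt_of_le hy1 (hall 1 (p+1) (by omega) (by omega))))
        have hd3 : t (p+1) ≠ y :=
          ne_of_gt (lt_of_lt_of_le hy1 (hall 1 (p+1) (by omega) (by omega)))
        rw [if_neg hd2, if_neg hd3, if_neg hd3]
        have hz2 : t (p+1) - t 0 ≠ 0 := sub_ne_zero.2 hd2
        have hz3 : t (p+1) - y ≠ 0 := sub_ne_zero.2 hd3
        rcases Nat.eq_zero_or_pos p with rfl | hp1
        · -- p = 0
          rw [if_pos rfl]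
          have v1' : ins 0 y t (0+1) = y := ins_eq rfl
          rw [v1']
          simp only [Nat.zero_add, reduceIte]
          by_cases hyt0 : y = t 0
          · have hB1 : coxDeBoor 0 (ins 0 y t) x = 0 := by
              apply cdb_vanish 0 _ x (fun i hi => ins_mono (p := 0)
                (fun i hi => hm i (by omega)) le_rfl hky hyk.le i (by omega))
              rw [v1', v0]
              exact le_of_eq hyt0
            rw [hB1, if_pos hyt0, hyt0]
            have h2 : (x - t 0)/(t 1 - t 0) * 1 =
                (t 0 - t 0)/(t 1 - t 0) * ((t 1 - x)/(t 1 - t 0)) +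
                1 * ((x - t 0)/(t 1 - t 0)) := by
              rw [sub_self]; ring
            linear_combination h2 * coxDeBoor 0 (fun j => ins 0 y t (j+1)) x
          · rw [if_neg hyt0]
            have hz4 : y - t 0 ≠ 0 := sub_ne_zero.2 hyt0
            have hz2' : t 1 - t 0 ≠ 0 := hz2
            have hz3' : t 1 - y ≠ 0 := hz3
            have h1 : (x - t 0)/(t 1 - t 0) * 1 =
                (y - t 0)/(t 1 - t 0) * ((x - t 0)/(y - t 0)) := by
              field_simp
            have h2 : (x - t 0)/(t 1 - t 0) * 1 =
                (y - t 0)/(t 1 - t 0) * ((t 1 - x)/(t 1 - y)) +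
                1 * ((x - y)/(t 1 - y)) := by
              field_simp
              ring
            linear_combination h1 * coxDeBoor 0 (ins 0 y t) x +
              h2 * coxDeBoor 0 (fun j => ins 0 y t (j+1)) x
        · -- p ≥ 1
          have vp1 : ins 0 y t (p+1) = t p := ins_ge (by omega)
          rw [vp1, if_neg (show ¬(0 = p) by omega), if_pos rfl]
          have hd1 : t p ≠ t 0 :=
            ne_of_gt (lt_of_le_of_lt hky (lt_of_lt_of_le hy1 (hall 1 p (by omega) (by omega))))
          rw [if_neg hd1]
          have hz1 : t p - t 0 ≠ 0 := sub_ne_zero.2 hd1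
          have h1 : (x - t 0)/(t (p+1) - t 0) * ((y - t 0)/(t p - t 0)) =
              (y - t 0)/(t (p+1) - t 0) * ((x - t 0)/(t p - t 0)) := by ring
          have h2 : (x - t 0)/(t (p+1) - t 0) * 1 =
              (y - t 0)/(t (p+1) - t 0) * ((t (p+1) - x)/(t (p+1) - y)) +
              1 * ((x - y)/(t (p+1) - y)) := by
            field_simp
            ring
          linear_combination h1 * coxDeBoor p (ins 0 y t) x +
            h2 * coxDeBoor p (fun j => ins 0 y t (j+1)) x
      · -- 1 ≤ k ≤ p
        have hk1 : 1 ≤ k := by omega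
        have hrc : ins (k-1) y (fun j => t (j+1)) = fun j => ins k y t (j+1) :=
          ins_shift hk1 y t
        have hR : coxDeBoor p (fun j => t (j+1)) x =
            (if k - 1 = p then 1 else (y - t 1) / (t (p+1) - t 1)) *
              coxDeBoor p (fun j => ins k y t (j+1)) x +
            (if k - 1 = 0 then 1 else (t (p+2) - y) / (t (p+2) - t 2)) *
              coxDeBoor p (fun j => ins k y t (j+2)) x := by
          have h0 := ih (fun j => t (j+1)) y (k-1) (fun i hi => hm (i+1) (by omega)) (by omega)
            (by show t (k-1+1) ≤ y
                have e : k - 1 + 1 = k := by omega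
                rw [e]; exact hky)
            (by show y < t (k-1+1+1)
                have e : k - 1 + 1 = k := by omega
                rw [e]; exact hyk) x
          rw [hrc] at h0
          exact h0
        rw [hR, if_neg (show ¬(k-1 = p) by omega), if_neg hk0, if_neg hk0,
            if_neg (show ¬(k = p+1) by omega)]
        have v0 : ins k y t 0 = t 0 := ins_le (by omega)
        have v1 : ins k y t 1 = t 1 := ins_le (by omega)
        have vp2 : ins k y t (p+2) = t (p+1) := ins_ge (by omega)
        have vp3 : ins k y t (p+3) = t (p+2) := ins_ge (by omega)
        rw [v0, v1, vp2, vp3]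
        have hd1 : t (p+1) ≠ t 0 :=
          ne_of_gt (lt_of_le_of_lt ((hall 0 k (by omega) (by omega)).trans hky)
            (lt_of_lt_of_le hyk (hall (k+1) (p+1) (by omega) (by omega))))
        have hd2 : t (p+1) ≠ t 1 :=
          ne_of_gt (lt_of_le_of_lt ((hall 1 k (by omega) (by omega)).trans hky)
            (lt_of_lt_of_le hyk (hall (k+1) (p+1) (by omega) (by omega))))
        have hd3 : t (p+2) ≠ t 1 :=
          ne_of_gt (lt_of_le_of_lt ((hall 1 k (by omega) (by omega)).trans hky)
            (lt_of_lt_of_le hyk (hall (k+1) (p+2) (by omega) (by omega))))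
        rw [if_neg hd1, if_neg hd3, if_neg hd2, if_neg hd2]
        have hz1 : t (p+1) - t 0 ≠ 0 := sub_ne_zero.2 hd1
        have hz2 : t (p+1) - t 1 ≠ 0 := sub_ne_zero.2 hd2
        have hz3 : t (p+2) - t 1 ≠ 0 := sub_ne_zero.2 hd3
        have h2 : (x - t 0)/(t (p+1) - t 0) * ((t (p+1) - y)/(t (p+1) - t 1)) +
            (t (p+2) - x)/(t (p+2) - t 1) * ((y - t 1)/(t (p+1) - t 1)) =
            (y - t 0)/(t (p+1) - t 0) * ((t (p+1) - x)/(t (p+1) - t 1)) +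
            (t (p+2) - y)/(t (p+2) - t 1) * ((x - t 1)/(t (p+1) - t 1)) := by
          field_simp
          ring
        -- resolve CR and G2
        by_cases hk2 : k = 1
        · -- CR = 1, ins 2 = y
          rw [if_pos (show k - 1 = 0 by omega)]
          have v2 : ins k y t 2 = y := ins_eq (by omega)
          rw [v2]
          have hd4 : t (p+2) ≠ y :=
            ne_of_gt (lt_of_lt_of_le hyk (hall (k+1) (p+2) (by omega) (by omega)))
          rw [if_neg hd4]
          have hz4 : t (p+2) - y ≠ 0 := sub_ne_zero.2 hd4
          have h3 : (t (p+2) - x)/(t (p+2) - t 1) * 1 =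
              (t (p+2) - y)/(t (p+2) - t 1) * ((t (p+2) - x)/(t (p+2) - y)) := by
            field_simp
          rcases Nat.eq_or_lt_of_le hkp with hkp' | hkp'
          · -- k = p (so p = 1)
            rw [if_pos hkp']
            have vp1 : ins k y t (p+1) = y := ins_eq (by omega)
            rw [vp1]
            by_cases hyt0 : y = t 0
            · have hB1 : coxDeBoor p (ins k y t) x = 0 := by
                apply cdb_vanish p _ x (fun i hi => ins_mono (p := p)
                  (fun i hi => hm i (by omega)) hkp hky hyk.le i (by omega))
                rw [ins_eq (by omega), ins_le (by omega)]
                exact le_of_eq hyt0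
              have ht1 : t 1 = t 0 :=
                le_antisymm (le_trans (hall 1 k (by omega) (by omega)) (hyt0 ▸ hky))
                  (hall 0 1 (by omega) (by omega))
              rw [hB1, if_pos hyt0, hyt0, ht1]
              rw [ht1] at hz2 hz3
              have h2' : (x - t 0)/(t (p+1) - t 0) * ((t (p+1) - t 0)/(t (p+1) - t 0)) +
                  (t (p+2) - x)/(t (p+2) - t 0) * ((t 0 - t 0)/(t (p+1) - t 0)) =
                  (t 0 - t 0)/(t (p+1) - t 0) * ((t (p+1) - x)/(t (p+1) - t 0)) +
                  (t (p+2) - t 0)/(t (p+2) - t 0) * ((x - t 0)/(t (p+1) - t 0)) := by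
                field_simp
                ring
              have h3' : (t (p+2) - x)/(t (p+2) - t 0) * 1 =
                  (t (p+2) - t 0)/(t (p+2) - t 0) * ((t (p+2) - x)/(t (p+2) - t 0)) := by
                rw [div_self hz3, one_mul, mul_one]
              linear_combination h2' * coxDeBoor p (fun j => ins k (t 0) t (j+1)) x +
                h3' * coxDeBoor p (fun j => ins k (t 0) t (j+2)) x
            · rw [if_neg hyt0]
              have hz5 : y - t 0 ≠ 0 := sub_ne_zero.2 hyt0
              have h1 : (x - t 0)/(t (p+1) - t 0) * 1 =
                  (y - t 0)/(t (p+1) - t 0) * ((x - t 0)/(y - t 0)) := by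
                field_simp
              linear_combination h1 * coxDeBoor p (ins k y t) x +
                h2 * coxDeBoor p (fun j => ins k y t (j+1)) x +
                h3 * coxDeBoor p (fun j => ins k y t (j+2)) x
          · -- k < p
            rw [if_neg (show ¬(k = p) by omega)]
            have vp1 : ins k y t (p+1) = t p := ins_ge (by omega)
            rw [vp1]
            have hd5 : t p ≠ t 0 :=
              ne_of_gt (lt_of_le_of_lt ((hall 0 k (by omega) (by omega)).trans hky)
                (lt_of_lt_of_le hyk (hall (k+1) p (by omega) (by omega))))
            rw [if_neg hd5]
            have h1 : (x - t 0)/(t (p+1) - t 0) * ((y - t 0)/(t p - t 0)) =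
                (y - t 0)/(t (p+1) - t 0) * ((x - t 0)/(t p - t 0)) := by ring
            linear_combination h1 * coxDeBoor p (ins k y t) x +
              h2 * coxDeBoor p (fun j => ins k y t (j+1)) x +
              h3 * coxDeBoor p (fun j => ins k y t (j+2)) x
        · -- k ≥ 2
          rw [if_neg (show ¬(k - 1 = 0) by omega)]
          have v2 : ins k y t 2 = t 2 := ins_le (by omega)
          rw [v2]
          have hd4 : t (p+2) ≠ t 2 :=
            ne_of_gt (lt_of_le_of_lt ((hall 2 k (by omega) (by omega)).trans hky)
              (lt_of_lt_of_le hyk (hall (k+1) (p+2) (by omega) (by omega))))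
          rw [if_neg hd4]
          have hz4 : t (p+2) - t 2 ≠ 0 := sub_ne_zero.2 hd4
          have h3 : (t (p+2) - x)/(t (p+2) - t 1) * ((t (p+2) - y)/(t (p+2) - t 2)) =
              (t (p+2) - y)/(t (p+2) - t 1) * ((t (p+2) - x)/(t (p+2) - t 2)) := by ring
          rcases Nat.eq_or_lt_of_le hkp with hkp' | hkp'
          · -- k = p
            rw [if_pos hkp']
            have vp1 : ins k y t (p+1) = y := ins_eq (by omega)
            rw [vp1]
            by_cases hyt0 : y = t 0
            · have hB1 : coxDeBoor p (ins k y t) x = 0 := by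
                apply cdb_vanish p _ x (fun i hi => ins_mono (p := p)
                  (fun i hi => hm i (by omega)) hkp hky hyk.le i (by omega))
                rw [ins_eq (by omega), ins_le (by omega)]
                exact le_of_eq hyt0
              have ht1 : t 1 = t 0 :=
                le_antisymm (le_trans (hall 1 k (by omega) (by omega)) (hyt0 ▸ hky))
                  (hall 0 1 (by omega) (by omega))
              rw [hB1, if_pos hyt0, hyt0, ht1]
              rw [ht1] at hz2 hz3
              have h2' : (x - t 0)/(t (p+1) - t 0) * ((t (p+1) - t 0)/(t (p+1) - t 0)) +
                  (t (p+2) - x)/(t (p+2) - t 0) * ((t 0 - t 0)/(t (p+1) - t 0)) =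
                  (t 0 - t 0)/(t (p+1) - t 0) * ((t (p+1) - x)/(t (p+1) - t 0)) +
                  (t (p+2) - t 0)/(t (p+2) - t 0) * ((x - t 0)/(t (p+1) - t 0)) := by
                field_simp
                ring
              have h3' : (t (p+2) - x)/(t (p+2) - t 0) * ((t (p+2) - t 0)/(t (p+2) - t 2)) =
                  (t (p+2) - t 0)/(t (p+2) - t 0) * ((t (p+2) - x)/(t (p+2) - t 2)) := by ring
              linear_combination h2' * coxDeBoor p (fun j => ins k (t 0) t (j+1)) x +
                h3' * coxDeBoor p (fun j => ins k (t 0) t (j+2)) x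
            · rw [if_neg hyt0]
              have hz5 : y - t 0 ≠ 0 := sub_ne_zero.2 hyt0
              have h1 : (x - t 0)/(t (p+1) - t 0) * 1 =
                  (y - t 0)/(t (p+1) - t 0) * ((x - t 0)/(y - t 0)) := by
                field_simp
              linear_combination h1 * coxDeBoor p (ins k y t) x +
                h2 * coxDeBoor p (fun j => ins k y t (j+1)) x +
                h3 * coxDeBoor p (fun j => ins k y t (j+2)) x
          · -- k < p
            rw [if_neg (show ¬(k = p) by omega)]
            have vp1 : ins k y t (p+1) = t p := ins_ge (by omega)
            rw [vp1]
            have hd5 : t p ≠ t 0 :=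
              ne_of_gt (lt_of_le_of_lt ((hall 0 k (by omega) (by omega)).trans hky)
                (lt_of_lt_of_le hyk (hall (k+1) p (by omega) (by omega))))
            rw [if_neg hd5]
            have h1 : (x - t 0)/(t (p+1) - t 0) * ((y - t 0)/(t p - t 0)) =
                (y - t 0)/(t (p+1) - t 0) * ((x - t 0)/(t p - t 0)) := by ring
            linear_combination h1 * coxDeBoor p (ins k y t) x +
              h2 * coxDeBoor p (fun j => ins k y t (j+1)) x +
              h3 * coxDeBoor p (fun j => ins k y t (j+2)) x
    · -- k = p + 1
      have hkk : k = p + 1 := by omega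
      subst hkk
      have hrc : ins p y (fun j => t (j+1)) = fun j => ins (p+1) y t (j+1) :=
        ins_shift (k := p+1) (by omega) y t
      have hBl : coxDeBoor p t x = coxDeBoor p (ins (p+1) y t) x :=
        cdb_congr p _ _ x (fun j hj => (ins_le (by omega)).symm)
      have hR : coxDeBoor p (fun j => t (j+1)) x =
          (if p = p then 1 else (y - t 1) / (t (p+1) - t 1)) *
            coxDeBoor p (fun j => ins (p+1) y t (j+1)) x +
          (if p = 0 then 1 else (t (p+2) - y) / (t (p+2) - t 2)) *
            coxDeBoor p (fun j => ins (p+1) y t (j+2)) x := by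
        have h0 := ih (fun j => t (j+1)) y p (fun i hi => hm (i+1) (by omega)) le_rfl hky hyk x
        rw [hrc] at h0
        exact h0
      rw [hBl, hR, if_pos rfl, if_pos rfl, if_neg (show ¬(p+1 = 0) by omega)]
      have v0 : ins (p+1) y t 0 = t 0 := ins_le (by omega)
      have v1 : ins (p+1) y t 1 = t 1 := ins_le (by omega)
      have vp1 : ins (p+1) y t (p+1) = t (p+1) := ins_le le_rfl
      have vp2 : ins (p+1) y t (p+2) = y := ins_eq rfl
      have vp3 : ins (p+1) y t (p+3) = t (p+2) := ins_ge (by omega)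
      rw [v0, v1, vp1, vp2, vp3]
      have hd3 : t (p+2) ≠ t 1 :=
        ne_of_gt (lt_of_le_of_lt ((hall 1 (p+1) (by omega) (by omega)).trans hky) hyk)
      rw [if_neg hd3]
      have hz3 : t (p+2) - t 1 ≠ 0 := sub_ne_zero.2 hd3
      by_cases hyt1 : y = t 1
      · have hB2 : coxDeBoor p (fun j => ins (p+1) y t (j+1)) x = 0 := by
          apply cdb_vanish p _ x (fun i hi => ins_mono (p := p+1)
            (fun i hi => hm i (by omega)) (le_refl (p+1)) hky hyk.le (i+1) (by omega))
          show ins (p+1) y t (p+1+1) ≤ ins (p+1) y t (0+1)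
          rw [show ins (p+1) y t (p+1+1) = y from ins_eq rfl,
              show ins (p+1) y t (0+1) = t 1 from ins_le (by omega)]
          exact le_of_eq hyt1
        rw [hB2]
        rcases Nat.eq_zero_or_pos p with rfl | hp1
        · rw [if_pos rfl]
          have v2 : ins (0+1) y t 2 = y := ins_eq rfl
          rw [v2]
          have hd4 : t (0+2) ≠ y := ne_of_gt hyk
          rw [if_neg hd4]
          have hz4 : t (0+2) - y ≠ 0 := sub_ne_zero.2 hd4
          have h3 : (t (0+2) - x)/(t (0+2) - t 1) * 1 =
              (t (0+2) - y)/(t (0+2) - t 1) * ((t (0+2) - x)/(t (0+2) - y)) := by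
            field_simp
          linear_combination h3 * coxDeBoor 0 (fun j => ins (0+1) y t (j+2)) x
        · rw [if_neg (show ¬(p = 0) by omega)]
          have v2 : ins (p+1) y t 2 = t 2 := ins_le (by omega)
          rw [v2]
          have hd4 : t (p+2) ≠ t 2 :=
            ne_of_gt (lt_of_le_of_lt ((hall 2 (p+1) (by omega) (by omega)).trans hky) hyk)
          rw [if_neg hd4]
          have hz4 : t (p+2) - t 2 ≠ 0 := sub_ne_zero.2 hd4
          have h3 : (t (p+2) - x)/(t (p+2) - t 1) * ((t (p+2) - y)/(t (p+2) - t 2)) =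
              (t (p+2) - y)/(t (p+2) - t 1) * ((t (p+2) - x)/(t (p+2) - t 2)) := by ring
          linear_combination h3 * coxDeBoor p (fun j => ins (p+1) y t (j+2)) x
      · rw [if_neg (show y ≠ t 1 from hyt1), if_neg (show y ≠ t 1 from hyt1)]
        have hz5 : y - t 1 ≠ 0 := sub_ne_zero.2 hyt1
        have h2 : (t (p+2) - x)/(t (p+2) - t 1) * 1 =
            1 * ((y - x)/(y - t 1)) + (t (p+2) - y)/(t (p+2) - t 1) * ((x - t 1)/(y - t 1)) := by
          field_simp
          ring
        rcases Nat.eq_zero_or_pos p with rfl | hp1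
        · rw [if_pos rfl]
          have v2 : ins (0+1) y t 2 = y := ins_eq rfl
          rw [v2]
          have hd4 : t (0+2) ≠ y := ne_of_gt hyk
          rw [if_neg hd4]
          have hz4 : t (0+2) - y ≠ 0 := sub_ne_zero.2 hd4
          have h3 : (t (0+2) - x)/(t (0+2) - t 1) * 1 =
              (t (0+2) - y)/(t (0+2) - t 1) * ((t (0+2) - x)/(t (0+2) - y)) := by
            field_simp
          linear_combination h2 * coxDeBoor 0 (fun j => ins (0+1) y t (j+1)) x +
            h3 * coxDeBoor 0 (fun j => ins (0+1) y t (j+2)) x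
        · rw [if_neg (show ¬(p = 0) by omega)]
          have v2 : ins (p+1) y t 2 = t 2 := ins_le (by omega)
          rw [v2]
          have hd4 : t (p+2) ≠ t 2 :=
            ne_of_gt (lt_of_le_of_lt ((hall 2 (p+1) (by omega) (by omega)).trans hky) hyk)
          rw [if_neg hd4]
          have hz4 : t (p+2) - t 2 ≠ 0 := sub_ne_zero.2 hd4
          have h3 : (t (p+2) - x)/(t (p+2) - t 1) * ((t (p+2) - y)/(t (p+2) - t 2)) =
              (t (p+2) - y)/(t (p+2) - t 1) * ((t (p+2) - x)/(t (p+2) - t 2)) := by ring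
          linear_combination h2 * coxDeBoor p (fun j => ins (p+1) y t (j+1)) x +
            h3 * coxDeBoor p (fun j => ins (p+1) y t (j+2)) x

lemma sorted_eq {v w : ℕ → ℝ} {n : ℕ} (hv : ∀ i, i + 1 < n → v i ≤ v (i+1))
    (hw : ∀ i, i + 1 < n → w i ≤ w (i+1))
    (h : (Multiset.range n).map v = (Multiset.range n).map w) :
    ∀ i, i < n → v i = w i := by
  have hmono : ∀ (f : ℕ → ℝ), (∀ i, i + 1 < n → f i ≤ f (i+1)) →
      ((List.range n).map f).Pairwise (· ≤ ·) := by
    intro f hf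
    rw [List.pairwise_map]
    refine (List.pairwise_lt_range (n := n)).imp_of_mem ?_
    intro a b ha hb hab
    have hb' : b < n := List.mem_range.mp hb
    exact stepMono (n := n - 1) (fun i hi => hf i (by omega)) (Nat.le_of_lt hab) (by omega)
  have hperm : ((List.range n).map v).Perm ((List.range n).map w) :=
    Multiset.coe_eq_coe.mp h
  have heq := List.Perm.eq_of_pairwise' (hmono v hv) (hmono w hw) hperm
  intro i hi
  have h1 : ((List.range n).map v)[i]'(by simpa using hi) =
      ((List.range n).map w)[i]'(by simpa using hi) := by
    simp only [heq]
  simpa using h1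


lemma ins_merge (l m : ℕ) (a : ℝ) (u : ℕ → ℝ) :
    (Multiset.range (l+1+m+1)).map (ins l a u) = a ::ₘ (Multiset.range (l+1+m)).map u := by
  have h1 : (List.range (l+1+m+1)).map (ins l a u) =
      ((List.range (l+1)).map u) ++ a :: ((List.range m).map (fun j => u (l+1+j))) := by
    have e1 : l+1+m+1 = (l+1) + (m+1) := by omega
    rw [e1, List.range_add, List.map_append, List.map_map]
    congr 1
    · exact List.map_congr_left (fun x hx => ins_le (by have := List.mem_range.mp hx; omega))
    · rw [List.range_succ_eq_map, List.map_cons, List.map_map]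
      congr 1
      · show ins l a u (l+1+0) = a
        exact ins_eq (by omega)
      · refine List.map_congr_left (fun x hx => ?_)
        show ins l a u (l+1+(x+1)) = u (l+1+x)
        rw [ins_ge (by omega)]
        norm_num
  have h2 : (List.range (l+1+m)).map u =
      ((List.range (l+1)).map u) ++ ((List.range m).map (fun j => u (l+1+j))) := by
    rw [List.range_add, List.map_append, List.map_map]
    rfl
  have hperm : ((List.range (l+1+m+1)).map (ins l a u)).Perm (a :: (List.range (l+1+m)).map u) := by
    rw [h1, h2]
    exact List.perm_middle
  exact Multiset.coe_eq_coe.mpr hperm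

noncomputable def acoef (p l : ℕ) (a : ℝ) (u : ℕ → ℝ) (i : ℕ) : ℝ :=
  if i + p ≤ l then 1 else if i ≤ l then (a - u i) / (u (i+p) - u i) else 0

noncomputable def bcoef (p l : ℕ) (a : ℝ) (u : ℕ → ℝ) (i : ℕ) : ℝ :=
  if l ≤ i then 1 else if i + p + 1 ≤ l then 0 else (u (i+p+1) - a) / (u (i+p+1) - u (i+1))

set_option maxHeartbeats 1000000 in
/-- Knot insertion does not alter a B-spline curve, and the new control points are
convex combinations of consecutive old ones. -/
theorem bspline_curve_knot_insertion (p N d : ℕ) (hp : 1 ≤ p) (u w : ℕ → ℝ) (a : ℝ)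
    (hu : ∀ i, i < N + p → u i ≤ u (i + 1))
    (hreg : ∀ i, i < N → u i < u (i + p + 1))
    (ha1 : u p < a) (ha2 : a < u N)
    (hw : ∀ i, i < N + p + 1 → w i ≤ w (i + 1))
    (hmerge : (Multiset.range (N + p + 2)).map w =
      a ::ₘ (Multiset.range (N + p + 1)).map u)
    (c : ℕ → (Fin d → ℝ)) :
    ∃ c' : ℕ → (Fin d → ℝ),
      c' 0 = c 0 ∧ c' N = c (N - 1) ∧
      (∀ i, 0 < i → i < N → c' i ∈ segment ℝ (c (i - 1)) (c i)) ∧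
      ∀ x : ℝ, ∑ i ∈ Finset.range (N + 1), coxDeBoor p (fun k => w (i + k)) x • c' i =
        ∑ i ∈ Finset.range N, coxDeBoor p (fun k => u (i + k)) x • c i := by
  classical
  have humono : ∀ i j, i ≤ j → j ≤ N + p → u i ≤ u j :=
    fun i j h1 h2 => stepMono hu h1 h2
  have hNp : p < N := by
    by_contra hc
    push_neg at hc
    have := humono N p hc (by omega)
    linarith
  set l := Nat.findGreatest (fun i => u i ≤ a) (N-1) with hldef
  have hl1 : u l ≤ a := by
    rw [hldef]
    exact Nat.findGreatest_spec (m := p) (n := N - 1) (P := fun i => u i ≤ a) (by omega) ha1.le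
  have hl2 : p ≤ l := by
    rw [hldef]
    exact Nat.le_findGreatest (m := p) (n := N - 1) (P := fun i => u i ≤ a) (by omega) ha1.le
  have hl3 : l ≤ N - 1 := Nat.findGreatest_le _
  have hl4 : a < u (l+1) := by
    rcases Nat.lt_or_ge l (N-1) with h | h
    · by_contra hc
      push_neg at hc
      exact Nat.findGreatest_is_greatest (P := fun i => u i ≤ a) (n := N-1)
        (by omega) (by omega) hc
    · have hln : l + 1 = N := by omega
      rw [hln]
      exact ha2
  have hvw : ∀ i, i < N + p + 2 → w i = ins l a u i := by
    refine sorted_eq (fun i hi => hw i (by omega))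
      (fun i hi => ins_mono (p := N+p-1) (fun i hi => hu i (by omega)) (by omega) hl1 hl4.le i (by omega)) ?_
    have h2 : (Multiset.range (N+p+2)).map (ins l a u) = a ::ₘ (Multiset.range (N+p+1)).map u := by
      obtain ⟨m, hm⟩ : ∃ m, N + p + 1 = l + 1 + m := ⟨N + p - l, by omega⟩
      rw [show N + p + 2 = l + 1 + m + 1 by omega, show N + p + 1 = l + 1 + m from hm]
      exact ins_merge l m a u
    exact hmerge.trans h2.symm
  have key : ∀ i, i < N → ∀ x : ℝ,
      coxDeBoor p (fun k => u (i + k)) x =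
        acoef p l a u i * coxDeBoor p (fun k => w (i + k)) x +
        bcoef p l a u i * coxDeBoor p (fun k => w (i + 1 + k)) x := by
    intro i hiN x
    rcases Nat.lt_or_ge l (i + p + 1) with hc1 | hc1
    · rcases Nat.lt_or_ge l i with hc2 | hc2
      · -- l < i: shift case
        have e1 : coxDeBoor p (fun k => u (i + k)) x = coxDeBoor p (fun k => w (i + 1 + k)) x := by
          apply cdb_congr
          intro j hj
          rw [hvw (i+1+j) (by omega), ins_ge (by omega)]
          show u (i + j) = u (i + 1 + j - 1)
          congr 1
          omega
        rw [e1]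
        have ea : acoef p l a u i = 0 := by
          unfold acoef
          rw [if_neg (by omega), if_neg (by omega)]
        have eb : bcoef p l a u i = 1 := if_pos (by omega)
        rw [ea, eb]
        ring
      · -- i ≤ l ≤ i+p: middle
        have hmid := cdb_insert p (fun j => u (i + j)) a (l - i)
          (fun j hj => hu (i + j) (by omega)) (by omega)
          (by show u (i + (l - i)) ≤ a
              rw [show i + (l - i) = l by omega]
              exact hl1)
          (by show a < u (i + (l - i + 1))
              rw [show i + (l - i + 1) = l + 1 by omega]
              exact hl4) x
        have eB1 : coxDeBoor p (ins (l - i) a (fun j => u (i + j))) x =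
            coxDeBoor p (fun k => w (i + k)) x := by
          apply cdb_congr
          intro j hj
          by_cases hj1 : j ≤ l - i
          · rw [ins_le hj1, hvw (i + j) (by omega), ins_le (by omega)]
          · by_cases hj2 : j = l - i + 1
            · rw [ins_eq hj2, hvw (i + j) (by omega), ins_eq (by omega)]
            · rw [ins_ge (by omega), hvw (i + j) (by omega), ins_ge (by omega)]
              show u (i + (j - 1)) = u (i + j - 1)
              congr 1
              omega
        have eB2 : coxDeBoor p (fun j => ins (l - i) a (fun j' => u (i + j')) (j + 1)) x =
            coxDeBoor p (fun k => w (i + 1 + k)) x := by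
          apply cdb_congr
          intro j hj
          by_cases hj1 : j + 1 ≤ l - i
          · rw [ins_le hj1, hvw (i + 1 + j) (by omega), ins_le (by omega)]
            show u (i + (j + 1)) = u (i + 1 + j)
            congr 1
            omega
          · by_cases hj2 : j + 1 = l - i + 1
            · rw [ins_eq hj2, hvw (i + 1 + j) (by omega), ins_eq (by omega)]
            · rw [ins_ge (by omega), hvw (i + 1 + j) (by omega), ins_ge (by omega)]
              show u (i + (j + 1 - 1)) = u (i + 1 + j - 1)
              congr 1
              omega
        rw [eB1, eB2] at hmid
        rw [hmid]
        congr 1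
        · congr 1
          unfold acoef
          by_cases hip : i + p ≤ l
          · rw [if_pos hip, if_pos (show l - i = p by omega)]
          · rw [if_neg hip, if_pos (show i ≤ l by omega), if_neg (show ¬(l - i = p) by omega),
              show i + 0 = i from rfl]
        · congr 1
          unfold bcoef
          by_cases hil : l ≤ i
          · rw [if_pos hil, if_pos (show l - i = 0 by omega)]
          · rw [if_neg hil, if_neg (show ¬(i + p + 1 ≤ l) by omega),
              if_neg (show ¬(l - i = 0) by omega), show i + (p + 1) = i + p + 1 by omega]
    · -- i + p + 1 ≤ l: unchanged
      have e1 : coxDeBoor p (fun k => u (i + k)) x = coxDeBoor p (fun k => w (i + k)) x := by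
        apply cdb_congr
        intro j hj
        rw [hvw (i + j) (by omega), ins_le (by omega)]
      rw [e1]
      have ea : acoef p l a u i = 1 := if_pos (by omega)
      have eb : bcoef p l a u i = 0 := by
        unfold bcoef
        rw [if_neg (by omega), if_pos (by omega)]
      rw [ea, eb]
      ring
  refine ⟨fun i => acoef p l a u i • c i +
      (if i = 0 then 0 else bcoef p l a u (i - 1) • c (i - 1)), ?_, ?_, ?_, ?_⟩
  · show acoef p l a u 0 • c 0 + (if (0:ℕ) = 0 then 0 else bcoef p l a u (0-1) • c (0-1)) = c 0
    rw [if_pos rfl, add_zero, show acoef p l a u 0 = 1 from if_pos (by omega), one_smul]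
  · show acoef p l a u N • c N + (if N = 0 then 0 else bcoef p l a u (N-1) • c (N-1)) = c (N-1)
    rw [if_neg (show ¬(N = 0) by omega),
      show acoef p l a u N = 0 by unfold acoef; rw [if_neg (by omega), if_neg (by omega)],
      show bcoef p l a u (N - 1) = 1 from if_pos (by omega), zero_smul, one_smul, zero_add]
  · intro i hi0 hiN
    show acoef p l a u i • c i + (if i = 0 then 0 else bcoef p l a u (i-1) • c (i-1)) ∈ _
    rw [if_neg (show ¬(i = 0) by omega)]
    have hab : 0 ≤ acoef p l a u i ∧ 0 ≤ bcoef p l a u (i-1) ∧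
        acoef p l a u i + bcoef p l a u (i-1) = 1 := by
      unfold acoef bcoef
      by_cases h1 : i + p ≤ l
      · rw [if_pos h1, if_neg (show ¬(l ≤ i - 1) by omega),
          if_pos (show i - 1 + p + 1 ≤ l by omega)]
        norm_num
      · by_cases h2 : i ≤ l
        · rw [if_neg h1, if_pos h2, if_neg (show ¬(l ≤ i - 1) by omega),
            if_neg (show ¬(i - 1 + p + 1 ≤ l) by omega)]
          have e1 : i - 1 + p + 1 = i + p := by omega
          have e2 : i - 1 + 1 = i := by omega
          rw [e1, e2]
          have hua : u i ≤ a := (humono i l h2 (by omega)).trans hl1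
          have hau : a < u (i + p) := hl4.trans_le (humono (l+1) (i+p) (by omega) (by omega))
          have hpos : 0 < u (i+p) - u i := by linarith
          refine ⟨div_nonneg (by linarith) hpos.le, div_nonneg (by linarith) hpos.le, ?_⟩
          rw [← add_div, show a - u i + (u (i+p) - a) = u (i+p) - u i by ring,
            div_self (ne_of_gt hpos)]
        · rw [if_neg h1, if_neg h2, if_pos (show l ≤ i - 1 by omega)]
          norm_num
    obtain ⟨ha0, hb0, hab1⟩ := hab
    exact ⟨bcoef p l a u (i-1), acoef p l a u i, hb0, ha0, by linarith, by rw [add_comm]⟩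
  · intro x
    have split : ∀ j ∈ Finset.range (N+1),
        coxDeBoor p (fun k => w (j + k)) x • (acoef p l a u j • c j +
          (if j = 0 then 0 else bcoef p l a u (j-1) • c (j-1)))
        = coxDeBoor p (fun k => w (j + k)) x • (acoef p l a u j • c j) +
          coxDeBoor p (fun k => w (j + k)) x •
            (if j = 0 then 0 else bcoef p l a u (j-1) • c (j-1)) :=
      fun j _ => smul_add _ _ _
    rw [Finset.sum_congr rfl split, Finset.sum_add_distrib,
      Finset.sum_range_succ (f := fun j => coxDeBoor p (fun k => w (j+k)) x •
        (acoef p l a u j • c j)),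
      show acoef p l a u N = 0 by unfold acoef; rw [if_neg (by omega), if_neg (by omega)],
      zero_smul, smul_zero, add_zero,
      Finset.sum_range_succ' (f := fun j => coxDeBoor p (fun k => w (j+k)) x •
        (if j = 0 then 0 else bcoef p l a u (j-1) • c (j-1))),
      if_pos rfl, smul_zero, add_zero, ← Finset.sum_add_distrib]
    apply Finset.sum_congr rfl
    intro i hi
    have hiN : i < N := Finset.mem_range.mp hi
    rw [if_neg (Nat.succ_ne_zero i), key i hiN x]
    show coxDeBoor p (fun k => w (i + k)) x • (acoef p l a u i • c i) +
        coxDeBoor p (fun k => w (i + 1 + k)) x • (bcoef p l a u i • c i) = _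
    module
end

section
/- A B-spline curve lies in the convex hull of its coefficients: let p ≥ 0, let u_0 ≤ … ≤ u_{N+p} be a knot vector with u_{i+p+1} > u_i for all i, let c_0, …, c_{N−1} ∈ ℝ^d, and let f(x) = Σ_{i=0}^{N−1} c_i B_{i,p}(x). Then for every x ∈ [u_p, u_N), the point f(x) lies in the convex hull of {c_0, …, c_{N−1}}. -/
private lemma cdb_mono_aux (u : ℕ → ℝ) (m : ℕ) (hu : ∀ i, i < m → u i ≤ u (i + 1)) :
    ∀ j, j ≤ m → ∀ i, i ≤ j → u i ≤ u j := by
  intro j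
  induction j with
  | zero =>
    intro _ i hi
    obtain rfl : i = 0 := by omega
    exact le_rfl
  | succ k ih =>
    intro hk i hi
    rcases Nat.eq_or_lt_of_le hi with h | h
    · rw [h]
    · exact le_trans (ih (by omega) i (by omega)) (hu k (by omega))

/-- Support: `coxDeBoor p u` vanishes outside `[u 0, u (p+1))`. -/
private lemma coxDeBoor_support (p : ℕ) (u : ℕ → ℝ)
    (hu : ∀ i, i < p + 1 → u i ≤ u (i + 1)) (x : ℝ)
    (hx : ¬ (u 0 ≤ x ∧ x < u (p + 1))) : coxDeBoor p u x = 0 := by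
  induction p generalizing u with
  | zero =>
    simp only [coxDeBoor]
    exact if_neg hx
  | succ p ih =>
    push_neg at hx
    simp only [coxDeBoor]
    have h1 : coxDeBoor p u x = 0 := by
      apply ih u (fun i hi => hu i (by omega))
      push_neg
      intro h0
      have := hx h0
      have := hu (p + 1) (by omega)
      linarith
    have h2 : coxDeBoor p (fun i => u (i + 1)) x = 0 := by
      apply ih _ (fun i hi => hu (i + 1) (by omega))
      push_neg
      intro h0
      have h01 : u 0 ≤ u 1 := hu 0 (by omega)
      exact hx (le_trans h01 h0)
    rw [h1, h2]
    ring

/-- Nonnegativity of B-splines. -/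
private lemma coxDeBoor_nonneg (p : ℕ) (u : ℕ → ℝ)
    (hu : ∀ i, i < p + 1 → u i ≤ u (i + 1)) (x : ℝ) :
    0 ≤ coxDeBoor p u x := by
  induction p generalizing u with
  | zero =>
    simp only [coxDeBoor]
    split <;> norm_num
  | succ p ih =>
    by_cases hsupp : u 0 ≤ x ∧ x < u (p + 2)
    · simp only [coxDeBoor]
      have t1 : 0 ≤ (if u (p + 1) = u 0 then 0 else (x - u 0) / (u (p + 1) - u 0)) := by
        split
        · exact le_rfl
        · rename_i hne
          have hle : u 0 ≤ u (p + 1) :=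
            cdb_mono_aux u (p + 2) hu (p + 1) (by omega) 0 (by omega)
          have : u 0 < u (p + 1) := lt_of_le_of_ne hle (Ne.symm hne)
          apply div_nonneg <;> linarith [hsupp.1]
      have t2 : 0 ≤ (if u (p + 2) = u 1 then 0 else (u (p + 2) - x) / (u (p + 2) - u 1)) := by
        split
        · exact le_rfl
        · rename_i hne
          have hle : u 1 ≤ u (p + 2) :=
            cdb_mono_aux u (p + 2) hu (p + 2) (by omega) 1 (by omega)
          have : u 1 < u (p + 2) := lt_of_le_of_ne hle (Ne.symm hne)
          apply div_nonneg <;> linarith [hsupp.2]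
      have r1 := ih u (fun i hi => hu i (by omega))
      have r2 := ih (fun i => u (i + 1)) (fun i hi => hu (i + 1) (by omega))
      positivity
    · rw [coxDeBoor_support (p + 1) u hu x hsupp]

/-- Partition of unity on `[u p, u N)`. -/
private lemma coxDeBoor_sum (p : ℕ) (u : ℕ → ℝ) :
    ∀ N : ℕ, (∀ i, i < N + p → u i ≤ u (i + 1)) →
    ∀ x : ℝ, u p ≤ x → x < u N →
    ∑ i ∈ Finset.range N, coxDeBoor p (fun k => u (i + k)) x = 1 := by
  induction p with
  | zero =>
    intro N hu x hx1 hx2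
    set i₀ := Nat.findGreatest (fun i => u i ≤ x) N with hi₀def
    have hP0 : u 0 ≤ x := hx1
    have hspec : u i₀ ≤ x :=
      Nat.findGreatest_spec (P := fun i => u i ≤ x) (Nat.zero_le N) hP0
    have hi₀le : i₀ ≤ N := Nat.findGreatest_le (P := fun i => u i ≤ x) N
    have hi₀N : i₀ < N := by
      rcases lt_or_eq_of_le hi₀le with h | h
      · exact h
      · exfalso; rw [h] at hspec; linarith
    have hnext : x < u (i₀ + 1) := by
      by_contra h
      push_neg at h
      exact Nat.findGreatest_is_greatest (P := fun i => u i ≤ x)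
        (Nat.lt_succ_self i₀) (by omega) h
    rw [Finset.sum_eq_single_of_mem i₀ (Finset.mem_range.mpr hi₀N)]
    · have hcond : u (i₀ + 0) ≤ x ∧ x < u (i₀ + 1) := ⟨by simpa using hspec, hnext⟩
      simp only [coxDeBoor]
      rw [if_pos hcond]
    · intro j hj hne
      simp only [Finset.mem_range] at hj
      have hcond : ¬ (u (j + 0) ≤ x ∧ x < u (j + 1)) := by
        rintro ⟨hjx, hjx'⟩
        rcases lt_or_gt_of_ne hne with h | h
        · have : u (j + 1) ≤ u i₀ :=
            cdb_mono_aux u (N + 0) hu i₀ (by omega) (j + 1) (by omega)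
          linarith
        · have : ¬ u j ≤ x :=
            Nat.findGreatest_is_greatest (P := fun i => u i ≤ x) h (by omega)
          exact this (by simpa using hjx)
      simp only [coxDeBoor]
      rw [if_neg hcond]
  | succ p ih =>
    intro N hu x hx1 hx2
    set B : ℕ → ℝ := fun i => coxDeBoor p (fun k => u (i + k)) x with hB
    set a : ℕ → ℝ := fun i =>
      if u (i + p + 1) = u i then 0 else (x - u i) / (u (i + p + 1) - u i) with ha
    set e : ℕ → ℝ := fun i =>
      if u (i + p + 1) = u i then 0 else (u (i + p + 1) - x) / (u (i + p + 1) - u i) with he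
    have hmonoB : ∀ i, i ≤ N → ∀ k, k < p + 1 →
        (fun k => u (i + k)) k ≤ (fun k => u (i + k)) (k + 1) := by
      intro i hi k hk
      show u (i + k) ≤ u (i + (k + 1))
      have e1 : i + (k + 1) = (i + k) + 1 := by omega
      rw [e1]
      exact hu (i + k) (by omega)
    have hBsupp : ∀ i, i ≤ N → ¬ (u i ≤ x ∧ x < u (i + p + 1)) → B i = 0 := by
      intro i hi hout
      rw [hB]
      apply coxDeBoor_support p _ (hmonoB i hi) x
      show ¬ (u (i + 0) ≤ x ∧ x < u (i + (p + 1)))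
      have e1 : i + 0 = i := by omega
      have e2 : i + (p + 1) = i + p + 1 := by omega
      rw [e1, e2]
      exact hout
    have hB0 : B 0 = 0 := by
      apply hBsupp 0 (by omega)
      rintro ⟨-, hlt⟩
      have h0 : u (0 + p + 1) = u (p + 1) := by norm_num
      rw [h0] at hlt
      linarith
    have hBN : B N = 0 := by
      apply hBsupp N (by omega)
      rintro ⟨hle, -⟩
      linarith
    have hterm : ∀ i ∈ Finset.range N,
        coxDeBoor (p + 1) (fun k => u (i + k)) x = a i * B i + e (i + 1) * B (i + 1) := by
      intro i hi
      have e1 : i + (p + 1) = i + p + 1 := by omega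
      have e2 : i + 0 = i := by omega
      have e3 : i + (p + 2) = (i + 1) + p + 1 := by omega
      have hfun : (fun k => u (i + (k + 1))) = (fun k => u ((i + 1) + k)) := by
        funext k; congr 1; omega
      simp only [coxDeBoor, ha, he, hB, e1, e2, e3, hfun]
    rw [Finset.sum_congr rfl hterm, Finset.sum_add_distrib]
    have hsum1 : ∑ i ∈ Finset.range N, a i * B i = ∑ i ∈ Finset.range (N + 1), a i * B i := by
      rw [Finset.sum_range_succ, hBN]
      ring
    have hsum2 : ∑ i ∈ Finset.range N, e (i + 1) * B (i + 1)
        = ∑ i ∈ Finset.range (N + 1), e i * B i := by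
      rw [Finset.sum_range_succ' (fun i => e i * B i) N, hB0]
      ring
    rw [hsum1, hsum2, ← Finset.sum_add_distrib]
    have hpt : ∀ i ∈ Finset.range (N + 1), a i * B i + e i * B i = B i := by
      intro i hi
      simp only [Finset.mem_range] at hi
      by_cases hdeg : u (i + p + 1) = u i
      · have hBi : B i = 0 := by
          apply hBsupp i (by omega)
          rintro ⟨h1, h2⟩
          rw [hdeg] at h2
          linarith
        rw [hBi]; ring
      · have hlt : u i < u (i + p + 1) := by
          have : u i ≤ u (i + p + 1) :=
            cdb_mono_aux u (N + (p + 1)) hu (i + p + 1) (by omega) i (by omega)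
          exact lt_of_le_of_ne this (Ne.symm hdeg)
        simp only [ha, he]
        rw [if_neg hdeg, if_neg hdeg]
        have hne : u (i + p + 1) - u i ≠ 0 := by linarith
        field_simp
        ring
    rw [Finset.sum_congr rfl hpt]
    apply ih (N + 1) (fun i hi => hu i (by omega)) x
    · calc u p ≤ u (p + 1) := hu p (by omega)
      _ ≤ x := hx1
    · calc x < u N := hx2
      _ ≤ u (N + 1) := hu N (by omega)

/-- A B-spline curve lies in the convex hull of its coefficients on [u p, u N). -/
theorem bspline_curve_convex_hull (p N d : ℕ) (u : ℕ → ℝ)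
    (hu : ∀ i, i < N + p → u i ≤ u (i + 1))
    (hreg : ∀ i, i < N → u i < u (i + p + 1))
    (c : ℕ → (Fin d → ℝ)) :
    ∀ x ∈ Set.Ico (u p) (u N),
      (∑ i ∈ Finset.range N, coxDeBoor p (fun k => u (i + k)) x • c i) ∈
        convexHull ℝ (c '' {i : ℕ | i < N}) := by
  intro x hx
  obtain ⟨hx1, hx2⟩ := hx
  set w : ℕ → ℝ := fun i => coxDeBoor p (fun k => u (i + k)) x with hw
  have hnn : ∀ i ∈ Finset.range N, 0 ≤ w i := by
    intro i hi
    simp only [Finset.mem_range] at hi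
    apply coxDeBoor_nonneg p _ _ x
    intro k hk
    show u (i + k) ≤ u (i + (k + 1))
    have e1 : i + (k + 1) = (i + k) + 1 := by omega
    rw [e1]
    exact hu (i + k) (by omega)
  have hsum : ∑ i ∈ Finset.range N, w i = 1 :=
    coxDeBoor_sum p u N hu x hx1 hx2
  have hmem := Finset.centerMass_mem_convexHull (t := Finset.range N)
    (w := w) (z := c) (hw₀ := hnn) (hws := by rw [hsum]; norm_num)
    (hz := by
      intro i hi
      simp only [Finset.mem_range] at hi
      exact Set.mem_image_of_mem c hi)
  rwa [Finset.centerMass_eq_of_sum_1 _ _ hsum] at hmem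
end

section
/- The LR B-spline refinement update with duplicate merging preserves the represented surface: let 𝓑 be a finite set of functions ℝ² → ℝ, let s : 𝓑 → ℝ with s_B > 0 for all B, let c : 𝓑 → ℝ^d, and let F = Σ_{B∈𝓑} c_B s_B B. Let B* ∈ 𝓑 and suppose B* = α_1 B_1 + α_2 B_2 (pointwise) for functions B_1, B_2 : ℝ² → ℝ and reals α_1, α_2 > 0, where B_1 = B_d for some B_d ∈ 𝓑 \ {B*} and B_2 ∉ 𝓑. Define the new collection 𝓑' = (𝓑 \ {B*}) ∪ {B_2} with s'_{B_d} := s_{B_d} + s_{B*}α_1, c'_{B_d} := (s_{B_d} c_{B_d} + s_{B*} α_1 c_{B*}) / s'_{B_d}, s'_{B_2} := s_{B*} α_2, c'_{B_2} := c_{B*}, and s'_B := s_B, c'_B := c_B for all other B ∈ 𝓑'. Then s'_B > 0 for all B ∈ 𝓑' and Σ_{B∈𝓑'} c'_B s'_B B(x,y) = F(x,y) for all (x,y) ∈ ℝ². -/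
open Classical in
/-- The LR B-spline refinement update with duplicate merging preserves the represented
surface: replacing B* by α₁ B₁ + α₂ B₂ where B₁ duplicates Bd ∈ 𝓑, accumulating
scaling factors and averaging coefficients, keeps all scaling factors positive and
leaves the surface F = Σ c_B s_B B unchanged. -/
theorem lr_refinement_preserves_surface (d : ℕ)
    (𝓑 : Finset (ℝ × ℝ → ℝ)) (s : (ℝ × ℝ → ℝ) → ℝ)
    (c : (ℝ × ℝ → ℝ) → (Fin d → ℝ))
    (Bstar Bd B₂ : ℝ × ℝ → ℝ) (α₁ α₂ : ℝ)
    (hs : ∀ B ∈ 𝓑, 0 < s B)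
    (hstar : Bstar ∈ 𝓑) (hd : Bd ∈ 𝓑) (hne : Bd ≠ Bstar) (h2 : B₂ ∉ 𝓑)
    (hα₁ : 0 < α₁) (hα₂ : 0 < α₂)
    (hdecomp : ∀ q : ℝ × ℝ, Bstar q = α₁ * Bd q + α₂ * B₂ q)
    (s' : (ℝ × ℝ → ℝ) → ℝ) (c' : (ℝ × ℝ → ℝ) → (Fin d → ℝ))
    (hs'd : s' Bd = s Bd + s Bstar * α₁)
    (hc'd : c' Bd = (s' Bd)⁻¹ • (s Bd • c Bd + (s Bstar * α₁) • c Bstar))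
    (hs'2 : s' B₂ = s Bstar * α₂) (hc'2 : c' B₂ = c Bstar)
    (hother : ∀ B ∈ 𝓑, B ≠ Bstar → B ≠ Bd → s' B = s B ∧ c' B = c B) :
    (∀ B ∈ insert B₂ (𝓑.erase Bstar), 0 < s' B) ∧
    ∀ q : ℝ × ℝ,
      ∑ B ∈ insert B₂ (𝓑.erase Bstar), (s' B * B q) • c' B =
        ∑ B ∈ 𝓑, (s B * B q) • c B := by
  have hsd := hs Bd hd
  have hss := hs Bstar hstar
  have hs'dpos : 0 < s' Bd := by rw [hs'd]; positivity
  constructor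
  · intro B hB
    rcases Finset.mem_insert.mp hB with rfl | hB
    · rw [hs'2]; positivity
    · obtain ⟨hB1, hB2⟩ := Finset.mem_erase.mp hB
      by_cases hBd : B = Bd
      · subst hBd; exact hs'dpos
      · exact (hother B hB2 hB1 hBd).1 ▸ hs B hB2
  · intro q
    have h2' : B₂ ∉ 𝓑.erase Bstar := fun h => h2 (Finset.mem_of_mem_erase h)
    have hdmem : Bd ∈ 𝓑.erase Bstar := Finset.mem_erase.mpr ⟨hne, hd⟩
    rw [Finset.sum_insert h2', ← Finset.add_sum_erase _ _ hdmem,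
      ← Finset.add_sum_erase _ (fun B => (s B * B q) • c B) hstar,
      ← Finset.add_sum_erase _ _ hdmem]
    have hrest : ∑ B ∈ (𝓑.erase Bstar).erase Bd, (s' B * B q) • c' B
        = ∑ B ∈ (𝓑.erase Bstar).erase Bd, (s B * B q) • c B := by
      refine Finset.sum_congr rfl fun B hB => ?_
      have h1 := Finset.mem_erase.mp hB
      have h2m := Finset.mem_erase.mp h1.2
      obtain ⟨e1, e2⟩ := hother B h2m.2 h2m.1 h1.1
      rw [e1, e2]
    rw [hrest, hs'2, hc'2, hc'd, hs'd, hdecomp q]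
    have hne' : s Bd + s Bstar * α₁ ≠ 0 := by positivity
    match_scalars <;> field_simp <;> ring_nf
end

section
/- The LR B-spline refinement update preserves the scaled partition of unity: under the same update as in the duplicate-merging refinement step (𝓑 finite, s_B > 0, B* = α_1 B_1 + α_2 B_2 pointwise with α_1, α_2 > 0, B_1 = B_d ∈ 𝓑 \ {B*}, B_2 ∉ 𝓑, and s'_{B_d} := s_{B_d} + s_{B*}α_1, s'_{B_2} := s_{B*}α_2, s'_B := s_B otherwise), one has Σ_{B∈𝓑'} s'_B B(x,y) = Σ_{B∈𝓑} s_B B(x,y) for all (x,y) ∈ ℝ². In particular, if Σ_{B∈𝓑} s_B B ≡ 1 on a set Ω ⊆ ℝ², then Σ_{B∈𝓑'} s'_B B ≡ 1 on Ω. -/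
open Classical in
/-- The LR B-spline refinement update preserves the scaled partition of unity:
the sum Σ s_B B is unchanged by the duplicate-merging refinement step; in particular
if the scaled B-splines sum to one on a set Ω, so do the updated ones. -/
theorem lr_refinement_preserves_partition_of_unity
    (𝓑 : Finset (ℝ × ℝ → ℝ)) (s : (ℝ × ℝ → ℝ) → ℝ)
    (Bstar Bd B₂ : ℝ × ℝ → ℝ) (α₁ α₂ : ℝ)
    (hs : ∀ B ∈ 𝓑, 0 < s B)
    (hstar : Bstar ∈ 𝓑) (hd : Bd ∈ 𝓑) (hne : Bd ≠ Bstar) (h2 : B₂ ∉ 𝓑)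
    (hα₁ : 0 < α₁) (hα₂ : 0 < α₂)
    (hdecomp : ∀ q : ℝ × ℝ, Bstar q = α₁ * Bd q + α₂ * B₂ q)
    (s' : (ℝ × ℝ → ℝ) → ℝ)
    (hs'd : s' Bd = s Bd + s Bstar * α₁)
    (hs'2 : s' B₂ = s Bstar * α₂)
    (hother : ∀ B ∈ 𝓑, B ≠ Bstar → B ≠ Bd → s' B = s B) :
    (∀ q : ℝ × ℝ,
      ∑ B ∈ insert B₂ (𝓑.erase Bstar), s' B * B q = ∑ B ∈ 𝓑, s B * B q) ∧
    ∀ Ω : Set (ℝ × ℝ), (∀ q ∈ Ω, ∑ B ∈ 𝓑, s B * B q = 1) →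
      ∀ q ∈ Ω, ∑ B ∈ insert B₂ (𝓑.erase Bstar), s' B * B q = 1 := by
  have key : ∀ q : ℝ × ℝ,
      ∑ B ∈ insert B₂ (𝓑.erase Bstar), s' B * B q = ∑ B ∈ 𝓑, s B * B q := by
    intro q
    have h2' : B₂ ∉ 𝓑.erase Bstar := fun h => h2 (Finset.mem_of_mem_erase h)
    have hdE : Bd ∈ 𝓑.erase Bstar := Finset.mem_erase.mpr ⟨hne, hd⟩
    rw [Finset.sum_insert h2', ← Finset.add_sum_erase _ _ hdE,
      ← Finset.add_sum_erase 𝓑 _ hstar, ← Finset.add_sum_erase _ _ hdE]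
    have hcongr : ∑ B ∈ (𝓑.erase Bstar).erase Bd, s' B * B q
        = ∑ B ∈ (𝓑.erase Bstar).erase Bd, s B * B q := by
      refine Finset.sum_congr rfl fun B hB => ?_
      have hB1 := Finset.mem_erase.mp hB
      have hB2 := Finset.mem_erase.mp hB1.2
      rw [hother B hB2.2 hB2.1 hB1.1]
    rw [hcongr, hs'd, hs'2, hdecomp q]
    ring
  exact ⟨key, fun Ω hΩ q hq => (key q).trans (hΩ q hq)⟩
end

section
/- A B-spline curve interpolates the coefficient associated with a knot of full multiplicity: let p ≥ 1, let u_0 ≤ … ≤ u_{N+p} be a knot vector with u_{i+p+1} > u_i for all i, and suppose for some index j with 0 ≤ j ≤ N−1 that u_{j+1} = u_{j+2} = … = u_{j+p} = a with u_j < a < u_{j+p+1}. Then B_{j,p}(a) = 1 and B_{i,p}(a) = 0 for every i ≠ j; consequently, for any coefficients c_0, …, c_{N−1} ∈ ℝ^d, the spline curve f(x) = Σ_{i=0}^{N−1} c_i B_{i,p}(x) satisfies f(a) = c_j. -/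
lemma coxDeBoor_right_support (p : ℕ) : ∀ (u : ℕ → ℝ) (x : ℝ),
    (∀ i, i ≤ p → u i ≤ u (i + 1)) → u (p + 1) ≤ x → coxDeBoor p u x = 0 := by
  induction p with
  | zero =>
    intro u x hm hx
    simp only [coxDeBoor, ite_eq_right_iff, and_imp]
    intro _ h2; linarith
  | succ q ih =>
    intro u x hm hx
    have h1 : coxDeBoor q u x = 0 :=
      ih u x (fun i hi => hm i (by omega)) (le_trans (hm (q + 1) le_rfl) hx)
    have h2 : coxDeBoor q (fun i => u (i + 1)) x = 0 :=
      ih _ x (fun i hi => hm (i + 1) (by omega)) hx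
    simp [coxDeBoor, h1, h2]

lemma coxDeBoor_left_support (p : ℕ) : ∀ (u : ℕ → ℝ) (x : ℝ),
    (∀ i, i ≤ p → u i ≤ u (i + 1)) → x < u 0 → coxDeBoor p u x = 0 := by
  induction p with
  | zero =>
    intro u x hm hx
    simp only [coxDeBoor, ite_eq_right_iff, and_imp]
    intro h1 _; linarith
  | succ q ih =>
    intro u x hm hx
    have h1 : coxDeBoor q u x = 0 := ih u x (fun i hi => hm i (by omega)) hx
    have h2 : coxDeBoor q (fun i => u (i + 1)) x = 0 :=
      ih _ x (fun i hi => hm (i + 1) (by omega)) (lt_of_lt_of_le hx (hm 0 (by omega)))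
    simp [coxDeBoor, h1, h2]

/-- If all of `u 0, …, u p` equal `a` and `u (p+1) > a`, the B-spline equals 1 at `a`. -/
lemma coxDeBoor_eq_one (p : ℕ) : ∀ (u : ℕ → ℝ) (a : ℝ),
    (∀ i, i ≤ p → u i = a) → a < u (p + 1) → coxDeBoor p u a = 1 := by
  induction p with
  | zero =>
    intro u a he hx
    simp [coxDeBoor, (he 0 le_rfl).le, hx]
  | succ q ih =>
    intro u a he hx
    have h0 : u (q + 1) = u 0 := by rw [he (q + 1) le_rfl, he 0 (by omega)]
    have h1 : u 1 = a := he 1 (by omega)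
    have hne : u (q + 2) ≠ u 1 := by rw [h1]; exact (ne_of_gt hx)
    have hrec : coxDeBoor q (fun i => u (i + 1)) a = 1 :=
      ih _ a (fun i hi => he (i + 1) (by omega)) hx
    have hc : (u (q + 2) - a) / (u (q + 2) - u 1) = 1 := by
      rw [h1]; exact div_self (sub_ne_zero.mpr (ne_of_gt hx))
    simp [coxDeBoor, h0, hne, hrec, hc]

/-- If `u 0 = a` but `u p > a`, the B-spline vanishes at `a`. -/
lemma coxDeBoor_eq_zero_of_left_knot (p : ℕ) : ∀ (u : ℕ → ℝ) (a : ℝ),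
    (∀ i, i ≤ p → u i ≤ u (i + 1)) → u 0 = a → a < u p → coxDeBoor p u a = 0 := by
  induction p with
  | zero =>
    intro u a hm h0 hx
    exact absurd (h0 ▸ hx) (lt_irrefl a)
  | succ q ih =>
    intro u a hm h0 hx
    have hterm1 : (if u (q + 1) = u 0 then (0:ℝ) else (a - u 0) / (u (q + 1) - u 0)) = 0 := by
      split
      · rfl
      · rw [h0, sub_self, zero_div]
    have h01 : a ≤ u 1 := h0 ▸ hm 0 (by omega)
    have hrec : coxDeBoor q (fun i => u (i + 1)) a = 0 := by
      rcases eq_or_lt_of_le h01 with h | h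
      · exact ih _ a (fun i hi => hm (i + 1) (by omega)) h.symm hx
      · exact coxDeBoor_left_support q _ a (fun i hi => hm (i + 1) (by omega)) h
    simp [coxDeBoor, hterm1, hrec]

lemma mono_of_step (u : ℕ → ℝ) (M : ℕ) (hu : ∀ i, i < M → u i ≤ u (i + 1)) :
    ∀ a b, a ≤ b → b ≤ M → u a ≤ u b := by
  intro a b hab hbM
  induction b with
  | zero => simp [Nat.le_zero.mp hab]
  | succ n ihn =>
    rcases Nat.lt_or_ge a (n + 1) with h | h
    · exact le_trans (ihn (by omega) (by omega)) (hu n (by omega))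
    · have : a = n + 1 := by omega
      simp [this]

/-- A B-spline curve interpolates the coefficient associated with a knot of full
multiplicity: if u_{j+1} = ... = u_{j+p} = a with u_j < a < u_{j+p+1}, then
B_{j,p}(a) = 1, all other basis functions vanish at a, and f(a) = c_j. -/
theorem bspline_interpolates_at_full_multiplicity_knot (p N d : ℕ) (hp : 1 ≤ p)
    (u : ℕ → ℝ)
    (hu : ∀ i, i < N + p → u i ≤ u (i + 1))
    (hreg : ∀ i, i < N → u i < u (i + p + 1))
    (j : ℕ) (hj : j < N) (a : ℝ)
    (hmult : ∀ k, 1 ≤ k → k ≤ p → u (j + k) = a)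
    (hlo : u j < a) (hhi : a < u (j + p + 1)) :
    coxDeBoor p (fun k => u (j + k)) a = 1 ∧
    (∀ i, i < N → i ≠ j → coxDeBoor p (fun k => u (i + k)) a = 0) ∧
    ∀ c : ℕ → (Fin d → ℝ),
      ∑ i ∈ Finset.range N, coxDeBoor p (fun k => u (i + k)) a • c i = c j := by
  have hmono : ∀ a b : ℕ, a ≤ b → b ≤ N + p → u a ≤ u b := mono_of_step u (N + p) hu
  obtain ⟨q, rfl⟩ : ∃ q, p = q + 1 := ⟨p - 1, by omega⟩
  -- Part 1: B_j(a) = 1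
  have hBj : coxDeBoor (q + 1) (fun k => u (j + k)) a = 1 := by
    show (if u (j + (q + 1)) = u (j + 0) then (0:ℝ)
          else (a - u (j + 0)) / (u (j + (q + 1)) - u (j + 0))) *
        coxDeBoor q (fun k => u (j + k)) a +
      (if u (j + (q + 2)) = u (j + 1) then (0:ℝ)
          else (u (j + (q + 2)) - a) / (u (j + (q + 2)) - u (j + 1))) *
        coxDeBoor q (fun i => u (j + (i + 1))) a = 1
    have hq1 : u (j + (q + 1)) = a := hmult (q + 1) (by omega) le_rfl
    have hq2 : u (j + (q + 2)) = u (j + (q + 1) + 1) := by ring_nf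
    have hhi' : a < u (j + (q + 2)) := by rw [hq2]; exact hhi
    have h1 : u (j + 1) = a := hmult 1 (by omega) (by omega)
    have hrec1 : coxDeBoor q (fun k => u (j + k)) a = 0 := by
      apply coxDeBoor_right_support q _ a
      · intro i hi
        exact hu (j + i) (by omega)
      · rw [hq1]
    have hrec2 : coxDeBoor q (fun i => u (j + (i + 1))) a = 1 := by
      apply coxDeBoor_eq_one q _ a
      · intro i hi
        exact hmult (i + 1) (by omega) (by omega)
      · exact hhi'
    have hne2 : u (j + (q + 2)) ≠ u (j + 1) := by rw [h1]; exact ne_of_gt hhi'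
    rw [hrec1, hrec2, if_neg hne2, h1, div_self (sub_ne_zero.mpr (ne_of_gt hhi'))]
    ring
  -- Part 2: B_i(a) = 0 for i ≠ j
  have hBi : ∀ i, i < N → i ≠ j → coxDeBoor (q + 1) (fun k => u (i + k)) a = 0 := by
    intro i hiN hij
    have hwmono : ∀ k, k ≤ q + 1 → u (i + k) ≤ u (i + k + 1) :=
      fun k hk => hu (i + k) (by omega)
    rcases Nat.lt_or_ge i j with hlt | hge
    · -- i < j : support ends before a
      apply coxDeBoor_right_support (q + 1) _ a (fun k hk => hwmono k hk)
      have : u (i + (q + 1 + 1)) ≤ u (j + (q + 1)) := hmono _ _ (by omega) (by omega)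
      rw [hmult (q + 1) (by omega) le_rfl] at this
      exact this
    · have hgt : j < i := lt_of_le_of_ne hge (Ne.symm hij)
      have hia : a ≤ u i := by
        rw [← hmult 1 (by omega) (by omega)]
        exact hmono _ _ (by omega) (by omega)
      rcases eq_or_lt_of_le hia with heq | hlt'
      · -- u i = a : left knot equals a, but u (i + p) > a
        apply coxDeBoor_eq_zero_of_left_knot (q + 1) _ a (fun k hk => hwmono k hk)
        · simpa using heq.symm
        · have : u (j + (q + 1) + 1) ≤ u (i + (q + 1)) := hmono _ _ (by omega) (by omega)
          exact lt_of_lt_of_le hhi this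
      · -- a < u i : support starts after a
        apply coxDeBoor_left_support (q + 1) _ a (fun k hk => hwmono k hk)
        simpa using hlt'
  refine ⟨hBj, hBi, ?_⟩
  intro c
  rw [Finset.sum_eq_single j]
  · rw [hBj, one_smul]
  · intro i hi hij
    rw [hBi i (Finset.mem_range.mp hi) hij, zero_smul]
  · intro h
    exact absurd (Finset.mem_range.mpr hj) h
end

section
/- A B-spline whose knot values all have multiplicity at most its degree is continuous: let p ≥ 1 and let u = (u_0, …, u_{p+1}) be nondecreasing with u_0 < u_p and u_1 < u_{p+1} (equivalently, no value occurs more than p times among u_0, …, u_{p+1}). Then B[u] : ℝ → ℝ is continuous on all of ℝ. -/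
open Set Filter

lemma monoLe {p : ℕ} {u : ℕ → ℝ} (hu : ∀ i, i ≤ p → u i ≤ u (i + 1)) :
    ∀ i j, i ≤ j → j ≤ p + 1 → u i ≤ u j := by
  intro i j hij hj
  induction j with
  | zero => exact le_of_eq (by rw [Nat.le_zero.mp hij])
  | succ k ih =>
    rcases Nat.eq_or_lt_of_le hij with h | h
    · exact le_of_eq (by rw [h])
    · exact le_trans (ih (Nat.lt_succ_iff.mp h) (by omega)) (hu k (by omega))

lemma coxDeBoor_supp : ∀ (p : ℕ) (u : ℕ → ℝ) (x : ℝ),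
    (∀ i, i ≤ p → u i ≤ u (i + 1)) → ¬(u 0 ≤ x ∧ x < u (p + 1)) → coxDeBoor p u x = 0 := by
  intro p
  induction p with
  | zero => intro u x _ h; simp only [coxDeBoor]; exact if_neg h
  | succ p ih =>
    intro u x hu h
    push_neg at h
    have hu' : ∀ i, i ≤ p → u i ≤ u (i + 1) := fun i hi => hu i (by omega)
    have hv' : ∀ i, i ≤ p → u (i + 1) ≤ u (i + 1 + 1) := fun i hi => hu (i + 1) (by omega)
    have hA : coxDeBoor p u x = 0 := by
      apply ih u x hu'
      push_neg
      intro h0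
      have := h h0
      exact le_trans (hu (p + 1) le_rfl) this
    have hC : coxDeBoor p (fun i => u (i + 1)) x = 0 := by
      apply ih _ x hv'
      push_neg
      intro h1
      exact h (le_trans (monoLe hu 0 1 (by omega) (by omega)) h1)
    simp only [coxDeBoor, hA, hC, mul_zero, add_zero]

lemma coxDeBoor_bounds : ∀ (p : ℕ) (u : ℕ → ℝ) (x : ℝ),
    (∀ i, i ≤ p → u i ≤ u (i + 1)) →
    0 ≤ coxDeBoor p u x ∧ coxDeBoor p u x ≤ 2 ^ p := by
  intro p
  induction p with
  | zero => intro u x _; simp only [coxDeBoor]; split_ifs <;> norm_num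
  | succ p ih =>
    intro u x hu
    have hu' : ∀ i, i ≤ p → u i ≤ u (i + 1) := fun i hi => hu i (by omega)
    have hv' : ∀ i, i ≤ p → u (i + 1) ≤ u (i + 1 + 1) := fun i hi => hu (i + 1) (by omega)
    have hA := ih u x hu'
    have hC := ih (fun i => u (i + 1)) x hv'
    have hT1 : 0 ≤ (if u (p + 1) = u 0 then 0 else (x - u 0) / (u (p + 1) - u 0)) * coxDeBoor p u x ∧
        (if u (p + 1) = u 0 then 0 else (x - u 0) / (u (p + 1) - u 0)) * coxDeBoor p u x ≤ 2 ^ p := by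
      by_cases hs : u 0 ≤ x ∧ x < u (p + 1)
      · have hc : 0 ≤ (if u (p + 1) = u 0 then 0 else (x - u 0) / (u (p + 1) - u 0)) ∧
            (if u (p + 1) = u 0 then 0 else (x - u 0) / (u (p + 1) - u 0)) ≤ 1 := by
          split_ifs with hd
          · norm_num
          · have hlt : u 0 < u (p + 1) := lt_of_le_of_lt hs.1 hs.2
            constructor
            · exact div_nonneg (by linarith [hs.1]) (by linarith)
            · rw [div_le_one (by linarith)]; linarith [hs.2]
        constructor
        · exact mul_nonneg hc.1 hA.1
        · calc _ ≤ 1 * coxDeBoor p u x := mul_le_mul_of_nonneg_right hc.2 hA.1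
            _ ≤ 2 ^ p := by rw [one_mul]; exact hA.2
      · rw [coxDeBoor_supp p u x hu' hs, mul_zero]
        exact ⟨le_rfl, by positivity⟩
    have hT2 : 0 ≤ (if u (p + 2) = u 1 then 0 else (u (p + 2) - x) / (u (p + 2) - u 1)) *
          coxDeBoor p (fun i => u (i + 1)) x ∧
        (if u (p + 2) = u 1 then 0 else (u (p + 2) - x) / (u (p + 2) - u 1)) *
          coxDeBoor p (fun i => u (i + 1)) x ≤ 2 ^ p := by
      by_cases hs : u 1 ≤ x ∧ x < u (p + 2)
      · have hc : 0 ≤ (if u (p + 2) = u 1 then 0 else (u (p + 2) - x) / (u (p + 2) - u 1)) ∧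
            (if u (p + 2) = u 1 then 0 else (u (p + 2) - x) / (u (p + 2) - u 1)) ≤ 1 := by
          split_ifs with hd
          · norm_num
          · have hlt : u 1 < u (p + 2) := lt_of_le_of_lt hs.1 hs.2
            constructor
            · exact div_nonneg (by linarith [hs.2]) (by linarith)
            · rw [div_le_one (by linarith)]; linarith [hs.1]
        constructor
        · exact mul_nonneg hc.1 hC.1
        · calc _ ≤ 1 * coxDeBoor p (fun i => u (i + 1)) x :=
              mul_le_mul_of_nonneg_right hc.2 hC.1
            _ ≤ 2 ^ p := by rw [one_mul]; exact hC.2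
      · rw [coxDeBoor_supp p _ x hv' hs, mul_zero]
        exact ⟨le_rfl, by positivity⟩
    constructor
    · simpa only [coxDeBoor] using add_nonneg hT1.1 hT2.1
    · have : (2:ℝ) ^ (p + 1) = 2 ^ p + 2 ^ p := by ring
      rw [this]
      simpa only [coxDeBoor] using add_le_add hT1.2 hT2.2

lemma coxDeBoor_left_degenerate : ∀ (p : ℕ) (u : ℕ → ℝ),
    (∀ i, i ≤ p → u i ≤ u (i + 1)) → u 0 = u p → ∀ x,
    coxDeBoor p u x =
      if u 0 ≤ x ∧ x < u (p + 1) then ((u (p + 1) - x) / (u (p + 1) - u 0)) ^ p else 0 := by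
  intro p
  induction p with
  | zero => intro u _ _ x; simp only [coxDeBoor, pow_zero]
  | succ p ih =>
    intro u hu h0 x
    have hu' : ∀ i, i ≤ p → u i ≤ u (i + 1) := fun i hi => hu i (by omega)
    have hv' : ∀ i, i ≤ p → u (i + 1) ≤ u (i + 1 + 1) := fun i hi => hu (i + 1) (by omega)
    have h01 : u 0 = u 1 :=
      le_antisymm (hu 0 (by omega)) (h0 ▸ monoLe hu 1 (p + 1) (by omega) (by omega))
    have h1p : u 1 = u (p + 1) := by
      rw [← h01, h0]
    have hA : coxDeBoor p (fun i => u (i + 1)) x =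
        if u 1 ≤ x ∧ x < u (p + 2) then ((u (p + 2) - x) / (u (p + 2) - u 1)) ^ p else 0 :=
      ih (fun i => u (i + 1)) hv' h1p x
    simp only [coxDeBoor, if_pos h0.symm, zero_mul, zero_add, hA]
    by_cases hd : u (p + 2) = u 1
    · rw [if_pos hd]
      rw [zero_mul, eq_comm]
      rw [if_neg]
      rintro ⟨hx1, hx2⟩
      rw [hd, ← h01] at hx2
      exact absurd (lt_of_le_of_lt hx1 hx2) (lt_irrefl _)
    · rw [if_neg hd, mul_ite, mul_zero, ← h01]
      congr 1
      rw [← pow_succ']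

lemma coxDeBoor_right_degenerate : ∀ (p : ℕ) (u : ℕ → ℝ),
    (∀ i, i ≤ p → u i ≤ u (i + 1)) → u 1 = u (p + 1) → ∀ x,
    coxDeBoor p u x =
      if u 0 ≤ x ∧ x < u (p + 1) then ((x - u 0) / (u (p + 1) - u 0)) ^ p else 0 := by
  intro p
  induction p with
  | zero => intro u _ _ x; simp only [coxDeBoor, pow_zero]
  | succ p ih =>
    intro u hu h1 x
    have hu' : ∀ i, i ≤ p → u i ≤ u (i + 1) := fun i hi => hu i (by omega)
    have h12 : u 1 = u (p + 1) :=
      le_antisymm (monoLe hu 1 (p + 1) (by omega) (by omega))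
        (h1 ▸ hu (p + 1) le_rfl)
    have hA : coxDeBoor p u x =
        if u 0 ≤ x ∧ x < u (p + 1) then ((x - u 0) / (u (p + 1) - u 0)) ^ p else 0 :=
      ih u hu' h12 x
    have hdd : u (p + 2) = u 1 := h1.symm
    simp only [coxDeBoor, if_pos hdd, zero_mul, add_zero, hA]
    have hp2 : u (p + 1) = u (p + 2) := by rw [hdd, h12]
    by_cases hd : u (p + 1) = u 0
    · rw [if_pos hd, zero_mul, eq_comm, if_neg]
      rintro ⟨hx1, hx2⟩
      rw [← hp2, hd] at hx2
      exact absurd (lt_of_le_of_lt hx1 hx2) (lt_irrefl _)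
    · rw [if_neg hd, mul_ite, mul_zero, ← hp2]
      congr 1
      rw [← pow_succ']

lemma mul_bounded_continuousAt {f g : ℝ → ℝ} {a M : ℝ}
    (hf : ContinuousAt f a) (hfa : f a = 0) (hg : ∀ x, |g x| ≤ M) :
    ContinuousAt (fun x => f x * g x) a := by
  have hM : 0 ≤ M := le_trans (abs_nonneg _) (hg a)
  have key : Tendsto (fun x => f x * g x) (nhds a) (nhds 0) := by
    apply squeeze_zero_norm (a := fun x => M * |f x|)
    · intro x
      rw [Real.norm_eq_abs, abs_mul, mul_comm]
      exact mul_le_mul_of_nonneg_right (hg x) (abs_nonneg _)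
    · have h1 : Tendsto (fun x => M * |f x|) (nhds a) (nhds (M * |f a|)) :=
        Tendsto.const_mul M (hf.abs)
      simpa [hfa] using h1
  have : ContinuousAt (fun x => f x * g x) a ↔
      Tendsto (fun x => f x * g x) (nhds a) (nhds (f a * g a)) := Iff.rfl
  rw [this, hfa, zero_mul]
  exact key

lemma indicator_continuousAt {a b x : ℝ} (hab : a ≤ b)
    (hxa : a = b ∨ x ≠ a) (hxb : a = b ∨ x ≠ b) :
    ContinuousAt (fun y : ℝ => if a ≤ y ∧ y < b then (1 : ℝ) else 0) x := by
  rcases eq_or_lt_of_le hab with heq | hlt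
  · have : (fun y : ℝ => if a ≤ y ∧ y < b then (1 : ℝ) else 0) = fun _ => 0 := by
      funext y
      rw [if_neg]
      rintro ⟨h1, h2⟩
      rw [heq] at h1
      exact absurd (lt_of_le_of_lt h1 h2) (lt_irrefl _)
    rw [this]; exact continuousAt_const
  · have hxa := hxa.resolve_left (ne_of_lt hlt)
    have hxb := hxb.resolve_left (ne_of_lt hlt)
    rcases lt_trichotomy x a with h | h | h
    · apply Filter.EventuallyEq.continuousAt (y := 0)
      filter_upwards [Iio_mem_nhds h] with y hy
      rw [if_neg]; rintro ⟨h1, _⟩; exact absurd (lt_of_lt_of_le hy h1) (lt_irrefl _ : ¬ y < y)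
    · exact absurd h hxa
    · rcases lt_trichotomy x b with h' | h' | h'
      · apply Filter.EventuallyEq.continuousAt (y := 1)
        filter_upwards [Ioo_mem_nhds h h'] with y hy
        rw [if_pos ⟨le_of_lt hy.1, hy.2⟩]
      · exact absurd h' hxb
      · apply Filter.EventuallyEq.continuousAt (y := 0)
        filter_upwards [Ioi_mem_nhds h'] with y hy
        rw [if_neg]; rintro ⟨_, h2⟩; exact absurd (lt_trans h2 hy) (lt_irrefl _)

lemma coxDeBoor_continuousAt : ∀ (p : ℕ) (u : ℕ → ℝ),
    (∀ i, i ≤ p → u i ≤ u (i + 1)) → ∀ x : ℝ,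
    ¬(x = u 0 ∧ u 0 = u p ∧ u p < u (p + 1)) →
    ¬(x = u (p + 1) ∧ u 1 = u (p + 1) ∧ u 0 < u (p + 1)) →
    ContinuousAt (coxDeBoor p u) x := by
  intro p
  induction p with
  | zero =>
    intro u hu x H1 H2
    have he : coxDeBoor 0 u = fun y => if u 0 ≤ y ∧ y < u 1 then (1 : ℝ) else 0 := rfl
    rw [he]
    apply indicator_continuousAt (hu 0 (by omega))
    · by_cases h : u 0 = u 1
      · exact Or.inl h
      · exact Or.inr fun hx => H1 ⟨hx, rfl, lt_of_le_of_ne (hu 0 (by omega)) h⟩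
    · by_cases h : u 0 = u 1
      · exact Or.inl h
      · exact Or.inr fun hx => H2 ⟨hx, rfl, lt_of_le_of_ne (hu 0 (by omega)) h⟩
  | succ p ih =>
    intro u hu x H1 H2
    have hu' : ∀ i, i ≤ p → u i ≤ u (i + 1) := fun i hi => hu i (by omega)
    have hv' : ∀ i, i ≤ p → u (i + 1) ≤ u (i + 1 + 1) := fun i hi => hu (i + 1) (by omega)
    have hbdA : ∀ y, |coxDeBoor p u y| ≤ 2 ^ p := fun y => by
      rw [abs_of_nonneg (coxDeBoor_bounds p u y hu').1]
      exact (coxDeBoor_bounds p u y hu').2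
    have hbdC : ∀ y, |coxDeBoor p (fun i => u (i + 1)) y| ≤ 2 ^ p := fun y => by
      rw [abs_of_nonneg (coxDeBoor_bounds p _ y hv').1]
      exact (coxDeBoor_bounds p _ y hv').2
    have hB : coxDeBoor (p + 1) u = fun y =>
        (if u (p + 1) = u 0 then 0 else (y - u 0) / (u (p + 1) - u 0)) * coxDeBoor p u y +
        (if u (p + 2) = u 1 then 0 else (u (p + 2) - y) / (u (p + 2) - u 1)) *
          coxDeBoor p (fun i => u (i + 1)) y := by
      funext y; simp only [coxDeBoor]
    by_cases hbad : x = u (p + 1) ∧ u 1 = u (p + 1) ∧ u 0 < u 1 ∧ u 1 < u (p + 2)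
    · -- the cancellation point : u 1 = ⋯ = u (p+1) = x, u 0 < u 1 < u (p+2)
      obtain ⟨hx, h1p, h01, h12⟩ := hbad
      have hd1 : u (p + 1) ≠ u 0 := by rw [← h1p]; exact ne_of_gt h01
      have hd2 : u (p + 2) ≠ u 1 := ne_of_gt h12
      have hdpos : (0 : ℝ) < u (p + 1) - u 0 := by rw [← h1p]; linarith
      have hepos : (0 : ℝ) < u (p + 2) - u 1 := by linarith
      have hxu1 : x = u 1 := by rw [hx, h1p]
      have hCf : ∀ y, coxDeBoor p (fun i => u (i + 1)) y =
          if u 1 ≤ y ∧ y < u (p + 2) then ((u (p + 2) - y) / (u (p + 2) - u 1)) ^ p else 0 :=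
        fun y => coxDeBoor_left_degenerate p (fun i => u (i + 1)) hv' h1p y
      have hAf : ∀ y, coxDeBoor p u y =
          if u 0 ≤ y ∧ y < u (p + 1) then ((y - u 0) / (u (p + 1) - u 0)) ^ p else 0 :=
        coxDeBoor_right_degenerate p u hu' h1p
      have hBf : ∀ y, coxDeBoor (p + 1) u y =
          (y - u 0) / (u (p + 1) - u 0) *
            (if u 0 ≤ y ∧ y < u (p + 1) then ((y - u 0) / (u (p + 1) - u 0)) ^ p else 0) +
          (u (p + 2) - y) / (u (p + 2) - u 1) *
            (if u 1 ≤ y ∧ y < u (p + 2) then ((u (p + 2) - y) / (u (p + 2) - u 1)) ^ p else 0) := by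
        intro y
        rw [hB]
        simp only [if_neg hd1, if_neg hd2, hAf y, hCf y]
      set g1 : ℝ → ℝ := fun y => ((y - u 0) / (u (p + 1) - u 0)) ^ (p + 1) with hg1
      set g2 : ℝ → ℝ := fun y => ((u (p + 2) - y) / (u (p + 2) - u 1)) ^ (p + 1) with hg2
      have hcg1 : Continuous g1 :=
        ((continuous_id.sub continuous_const).div_const _).pow _
      have hcg2 : Continuous g2 :=
        ((continuous_const.sub continuous_id).div_const _).pow _
      have hBx : coxDeBoor (p + 1) u x = 1 := by
        rw [hBf x, if_neg (fun h => absurd (hx ▸ h.2) (lt_irrefl _)),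
          if_pos ⟨le_of_eq hxu1.symm, by rw [hxu1]; exact h12⟩]
        rw [hxu1, div_self (ne_of_gt hepos)]
        simp
      have hg1x : g1 x = 1 := by
        rw [hg1]
        simp only []
        rw [hx, div_self (ne_of_gt hdpos), one_pow]
      have hg2x : g2 x = 1 := by
        rw [hg2]
        simp only []
        rw [hxu1, div_self (ne_of_gt hepos), one_pow]
      apply continuousAt_iff_continuous_left_right.mpr
      constructor
      · -- left continuity : equals g1 on (u 0, x]
        apply ContinuousWithinAt.congr_of_eventuallyEq
          (hcg1.continuousWithinAt (s := Iic x) (x := x))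
        · filter_upwards [mem_nhdsWithin_of_mem_nhds (Ioi_mem_nhds (by rw [hxu1]; exact h01)),
            self_mem_nhdsWithin] with y hy1 hy2
          rcases eq_or_lt_of_le (mem_Iic.mp hy2) with rfl | hlt
          · rw [hBx, hg1x]
          · rw [hBf y, if_pos ⟨le_of_lt hy1, hx ▸ hlt⟩,
              if_neg (fun h => absurd (lt_of_le_of_lt h.1 (hxu1 ▸ hlt)) (lt_irrefl _))]
            rw [mul_zero, add_zero, hg1, ← pow_succ']
        · rw [hBx, hg1x]
      · -- right continuity : equals g2 on [x, u (p+2))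
        apply ContinuousWithinAt.congr_of_eventuallyEq
          (hcg2.continuousWithinAt (s := Ici x) (x := x))
        · filter_upwards [mem_nhdsWithin_of_mem_nhds (Iio_mem_nhds (by rw [hxu1]; exact h12)),
            self_mem_nhdsWithin] with y hy1 hy2
          rw [hBf y, if_neg (fun h => absurd (lt_of_le_of_lt (hx ▸ (hy2 : x ≤ y)) h.2) (lt_irrefl _)),
            if_pos ⟨le_trans (le_of_eq hxu1.symm) hy2, hy1⟩]
          rw [mul_zero, zero_add, hg2, ← pow_succ']
        · rw [hBx, hg2x]
    · -- no cancellation : termwise continuity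
      rw [hB]
      apply ContinuousAt.add
      · -- first term
        by_cases hd : u (p + 1) = u 0
        · simp only [if_pos hd, zero_mul]; exact continuousAt_const
        · simp only [if_neg hd]
          have hd' : u 0 < u (p + 1) :=
            lt_of_le_of_ne (monoLe hu 0 (p + 1) (by omega) (by omega)) (Ne.symm hd)
          by_cases hA1 : x = u 0 ∧ u 0 = u p ∧ u p < u (p + 1)
          · apply mul_bounded_continuousAt (M := 2 ^ p) _ _ hbdA
            · exact ((continuous_id.sub continuous_const).div_const _).continuousAt
            · rw [hA1.1]; simp
          · by_cases hA2 : x = u (p + 1) ∧ u 1 = u (p + 1) ∧ u 0 < u (p + 1)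
            · exfalso
              obtain ⟨hx, h1, h0⟩ := hA2
              have h01 : u 0 < u 1 := by rw [h1]; exact h0
              by_cases h2 : u 1 = u (p + 2)
              · exact H2 ⟨hx.trans (h1.symm.trans h2), h2, lt_of_lt_of_le h01 (le_of_eq h2)⟩
              · exact hbad ⟨hx, h1, h01,
                  lt_of_le_of_ne (monoLe hu 1 (p + 2) (by omega) (by omega)) h2⟩
            · exact (((continuous_id.sub continuous_const).div_const _).continuousAt).mul
                (ih u hu' x hA1 hA2)
      · -- second term
        by_cases hd : u (p + 2) = u 1
        · simp only [if_pos hd, zero_mul]; exact continuousAt_const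
        · simp only [if_neg hd]
          have hd' : u 1 < u (p + 2) :=
            lt_of_le_of_ne (monoLe hu 1 (p + 2) (by omega) (by omega)) (Ne.symm hd)
          by_cases hC1 : x = u 1 ∧ u 1 = u (p + 1) ∧ u (p + 1) < u (p + 2)
          · exfalso
            obtain ⟨hx, h1, h2⟩ := hC1
            by_cases h01 : u 0 = u 1
            · exact H1 ⟨by rw [hx, h01], by rw [h01, h1], h2⟩
            · exact hbad ⟨hx.trans h1, h1,
                lt_of_le_of_ne (hu 0 (by omega)) h01, lt_of_le_of_lt (le_of_eq h1) h2⟩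
          · by_cases hC2 : x = u (p + 2) ∧ u 2 = u (p + 2) ∧ u 1 < u (p + 2)
            · apply mul_bounded_continuousAt (M := 2 ^ p) _ _ hbdC
              · exact ((continuous_const.sub continuous_id).div_const _).continuousAt
              · rw [hC2.1]; simp
            · exact (((continuous_const.sub continuous_id).div_const _).continuousAt).mul
                (ih (fun i => u (i + 1)) hv' x hC1 hC2)


/-- A B-spline whose knot values all have multiplicity at most its degree is
continuous on all of ℝ. -/
theorem coxDeBoor_continuous (p : ℕ) (hp : 1 ≤ p) (u : ℕ → ℝ)
    (hu : ∀ i, i ≤ p → u i ≤ u (i + 1))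
    (h₀ : u 0 < u p) (h₁ : u 1 < u (p + 1)) :
    Continuous (coxDeBoor p u) := by
  rw [continuous_iff_continuousAt]
  intro x
  exact coxDeBoor_continuousAt p u hu x
    (fun h => absurd (h.2.1 ▸ h₀) (lt_irrefl _))
    (fun h => absurd (h.2.1 ▸ h₁) (lt_irrefl _))
end
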